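/- arXiv:2305.12186 — 9 statements merged into one kernel-verified Lean document; each statement's English description precedes it below -/
import Mathlib

section
/- Let γ > 0, set σ := 1/2 + π/(4γ), and let A be a real number with A² = 2σ(1 − 1/γ − σ). Define x : ℝ → ℝ by x(t) := σ + A·sin(πt/2). Then for every t ∈ ℝ one has x(t) = (γ/2) · ∫_{−3}^{−1} x(t+θ)(1 − x(t+θ)) dθ; i.e., x is an exact (4-periodic) solution of the renewal-equation component of the test problem. -/
open Real MeasureTheory intervalIntegral

/-!
Write `s(θ) = sin(π(t+θ)/2)`, so that `x(t+θ)(1 − x(t+θ)) = σ(1−σ) + A(1−2σ)s − A²s²`.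
The window `[−3, −1]` has length 2, half the period of `s`, whence `∫ s = −(4/π) sin(πt/2)`
and `∫ s² = 1`. The choice of `σ` makes `(γ/2)(4/π)(2σ − 1) = 1`, so the sine terms match,
and the choice of `A` makes the constant term `γσ(1−σ) − γA²/2` equal to `σ`.
-/

theorem integral_sin_pi_div_two_mul_add (t a : ℝ) :
    ∫ θ in a..a + 2, sin (π * (t + θ) / 2) = 4 / π * cos (π * (t + a) / 2) := by
  simp_rw [show ∀ θ, π * (t + θ) / 2 = π / 2 * θ + π * t / 2 from fun θ => by ring]
  rw [integral_comp_mul_add (fun u => sin u) (by positivity), smul_eq_mul, integral_sin,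
    show π / 2 * (a + 2) + π * t / 2 = π / 2 * a + π * t / 2 + π by ring, cos_add_pi]
  field_simp [pi_ne_zero]
  ring

theorem integral_sin_sq_pi_div_two_mul_add (t a : ℝ) :
    ∫ θ in a..a + 2, sin (π * (t + θ) / 2) ^ 2 = 1 := by
  simp_rw [show ∀ θ, π * (t + θ) / 2 = π / 2 * θ + π * t / 2 from fun θ => by ring]
  rw [integral_comp_mul_add (fun u => sin u ^ 2) (by positivity), smul_eq_mul, integral_sin_sq,
    show π / 2 * (a + 2) + π * t / 2 = π / 2 * a + π * t / 2 + π by ring, sin_add_pi,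
    cos_add_pi]
  field_simp [pi_ne_zero]
  ring

/-- The function `x(t) = σ + A sin(π t / 2)` with `σ = 1/2 + π/(4γ)` and
`A² = 2σ(1 − 1/γ − σ)` is an exact periodic solution of the renewal equation
`x(t) = (γ/2) ∫_{−3}^{−1} x(t+θ)(1 − x(t+θ)) dθ`. -/
theorem stmt0 (γ : ℝ) (hγ : 0 < γ)
    (σ A : ℝ) (hσ : σ = 1/2 + π/(4*γ))
    (hA : A^2 = 2*σ*(1 - 1/γ - σ))
    (x : ℝ → ℝ) (hx : ∀ t, x t = σ + A * Real.sin (π * t / 2)) :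
    ∀ t : ℝ, x t = (γ/2) * ∫ θ in (-3 : ℝ)..(-1), x (t + θ) * (1 - x (t + θ)) := by
  intro t
  have hexpand : ∀ θ, x (t + θ) * (1 - x (t + θ)) = σ * (1 - σ) +
      A * (1 - 2 * σ) * sin (π * (t + θ) / 2) - A ^ 2 * sin (π * (t + θ) / 2) ^ 2 := fun θ => by
    rw [hx]
    ring
  have hcos : cos (π * (t + -3) / 2) = -sin (π * t / 2) := by
    rw [show π * (t + -3) / 2 = π * t / 2 + π / 2 - 2 * π by ring, cos_sub_two_pi,
      cos_add_pi_div_two]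
  have hint : ∫ θ in (-3 : ℝ)..(-1), x (t + θ) * (1 - x (t + θ)) =
      2 * σ * (1 - σ) - 4 / π * A * (1 - 2 * σ) * sin (π * t / 2) - A ^ 2 := by
    simp_rw [hexpand]
    rw [intervalIntegral.integral_sub, intervalIntegral.integral_add,
      intervalIntegral.integral_const, intervalIntegral.integral_const_mul,
      intervalIntegral.integral_const_mul, show (-1 : ℝ) = -3 + 2 by norm_num,
      integral_sin_pi_div_two_mul_add, integral_sin_sq_pi_div_two_mul_add, hcos]
    · simp only [smul_eq_mul]
      ring
    all_goals exact (by fun_prop : Continuous _).intervalIntegrable _ _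
  rw [hint, hx, hA, hσ]
  field_simp
  ring
end

section
/- Let γ > 0, set σ := 1/2 + π/(4γ), and let A be a real number with A² = 2σ(1 − 1/γ − σ). Define x(t) := σ + A·sin(πt/2) and y(t) := −2·(σ + 2A·(2·sin(πt/2) + π·cos(πt/2))/(4 + π²)). Then y is differentiable and for every t ∈ ℝ one has y'(t) = γ · ∫_{−3}^{−1} x(t+θ)(1 − x(t+θ)) dθ + y(t); i.e., (x, y) is an exact (4-periodic) solution of the coupled test problem. -/
/-!
The delay window `[t - 3, t - 1]` has length 2, half the period of `sin (π s / 2)`. Over half a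
period `sin` integrates to a multiple of the cosine at the left end and `sin ^ 2` to a constant,
so `∫ x (1 - x)` over the window is `2σ(1 - σ) - A² - (4A(1 - 2σ)/π) sin (π t / 2)`. The relation
for `A²` makes `γ` times the constant part equal to `2σ`, cancelling the constant of `y`, and
`γ (1 - 2σ) = -π/2` turns the remaining term into `2A sin (π t / 2)`; what is left is an identity
between trigonometric polynomials of frequency `π / 2`.
-/

open Real MeasureTheory intervalIntegral

theorem integral_sin_mul_half_period {ω : ℝ} (hω : ω ≠ 0) (s : ℝ) :
    ∫ u in s..s + π / ω, sin (ω * u) = 2 * cos (ω * s) / ω := by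
  rw [integral_comp_mul_left (fun u => sin u) hω, integral_sin, mul_add,
    mul_div_cancel₀ _ hω, cos_add_pi, smul_eq_mul]
  field_simp
  ring

theorem integral_sin_mul_sq_half_period {ω : ℝ} (hω : ω ≠ 0) (s : ℝ) :
    ∫ u in s..s + π / ω, sin (ω * u) ^ 2 = π / (2 * ω) := by
  rw [integral_comp_mul_left (fun u => sin u ^ 2) hω, integral_sin_sq, mul_add,
    mul_div_cancel₀ _ hω, sin_add_pi, cos_add_pi, smul_eq_mul]
  field_simp
  ring

theorem integral_delay_logistic_sin (σ A t : ℝ) :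
    ∫ θ in (-3 : ℝ)..(-1),
        (σ + A * sin (π * (t + θ) / 2)) * (1 - (σ + A * sin (π * (t + θ) / 2)))
      = 2 * σ * (1 - σ) - A ^ 2 - 4 * A * (1 - 2 * σ) / π * sin (π * t / 2) := by
  have hω : π / 2 ≠ 0 := by positivity
  have hwindow : t + -1 = (t + -3) + π / (π / 2) := by field_simp; ring
  have hcos : cos (π / 2 * (t + -3)) = -sin (π * t / 2) := by
    rw [show π / 2 * (t + -3) = (π * t / 2 - π / 2) - π by ring, cos_sub_pi, cos_sub_pi_div_two]
  calc ∫ θ in (-3 : ℝ)..(-1),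
        (σ + A * sin (π * (t + θ) / 2)) * (1 - (σ + A * sin (π * (t + θ) / 2)))
      = ∫ u in (t + -3)..(t + -1), (σ * (1 - σ) + A * (1 - 2 * σ) * sin (π / 2 * u)
          - A ^ 2 * sin (π / 2 * u) ^ 2) := by
        rw [← integral_comp_add_left]
        congr 1
        ext θ
        ring_nf
    _ = 2 * σ * (1 - σ) - A ^ 2 - 4 * A * (1 - 2 * σ) / π * sin (π * t / 2) := by
        rw [intervalIntegral.integral_sub, intervalIntegral.integral_add,
          intervalIntegral.integral_const, intervalIntegral.integral_const_mul,
          intervalIntegral.integral_const_mul, hwindow, integral_sin_mul_half_period hω,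
          integral_sin_mul_sq_half_period hω, hcos]
        · field_simp
          ring
        all_goals exact Continuous.intervalIntegrable (by fun_prop) _ _

theorem mul_delay_integral_eq {γ σ A : ℝ} (hγ : γ ≠ 0) (hσ : σ = 1 / 2 + π / (4 * γ))
    (hA : A ^ 2 = 2 * σ * (1 - 1 / γ - σ)) (S : ℝ) :
    γ * (2 * σ * (1 - σ) - A ^ 2 - 4 * A * (1 - 2 * σ) / π * S) = 2 * σ + 2 * A * S := by
  have hbalance : γ * (2 * σ * (1 - σ) - A ^ 2) = 2 * σ := by
    rw [hA]
    field_simp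
    ring
  have hslope : γ * (1 - 2 * σ) = -π / 2 := by
    rw [hσ]
    field_simp
    ring
  rw [mul_sub, hbalance,
    show γ * (4 * A * (1 - 2 * σ) / π * S) = 4 * A / π * S * (γ * (1 - 2 * σ)) by ring, hslope]
  field_simp
  ring

theorem hasDerivAt_add_sin_add_cos (c a b ω t : ℝ) :
    HasDerivAt (fun s => c + a * sin (ω * s) + b * cos (ω * s))
      (ω * (a * cos (ω * t) - b * sin (ω * t))) t := by
  have hlin : HasDerivAt (fun s => ω * s) ω t := by simpa using (hasDerivAt_id t).const_mul ω
  exact ((((hasDerivAt_sin _).comp t hlin).const_mul a).const_add c |>.add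
    (((hasDerivAt_cos _).comp t hlin).const_mul b)).congr_deriv (by ring)

/-- With `σ = 1/2 + π/(4γ)`, `A² = 2σ(1 − 1/γ − σ)`,
`x(t) = σ + A sin(π t / 2)` and
`y(t) = −2(σ + 2A(2 sin(π t/2) + π cos(π t/2))/(4 + π²))`, the function `y` is
differentiable with `y'(t) = γ ∫_{−3}^{−1} x(t+θ)(1 − x(t+θ)) dθ + y(t)`,
so that `(x, y)` is an exact periodic solution of the coupled test problem. -/
theorem stmt1 (γ : ℝ) (hγ : 0 < γ)
    (σ A : ℝ) (hσ : σ = 1/2 + π/(4*γ))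
    (hA : A^2 = 2*σ*(1 - 1/γ - σ))
    (x y : ℝ → ℝ)
    (hx : ∀ t, x t = σ + A * Real.sin (π * t / 2))
    (hy : ∀ t, y t = -2 * (σ + 2*A*(2*Real.sin (π * t / 2) + π * Real.cos (π * t / 2))/(4 + π^2))) :
    ∀ t : ℝ, HasDerivAt y
      (γ * (∫ θ in (-3 : ℝ)..(-1), x (t + θ) * (1 - x (t + θ))) + y t) t := by
  intro t
  have hy_eq : y = fun s => -2 * σ + -8 * A / (4 + π ^ 2) * sin (π / 2 * s)
      + -4 * A * π / (4 + π ^ 2) * cos (π / 2 * s) := by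
    funext s
    rw [hy, show π * s / 2 = π / 2 * s by ring]
    ring
  simp only [hx]
  rw [integral_delay_logistic_sin, mul_delay_integral_eq hγ.ne' hσ hA, hy_eq]
  refine (hasDerivAt_add_sin_add_cos _ _ _ _ t).congr_deriv ?_
  rw [show π / 2 * t = π * t / 2 by ring]
  field_simp
  ring
end

section
/- Let d ≥ 1, τ > 0, let K : ℝ × ℝ^d × ℝ^d → ℝ^d be continuous, and let x, y : ℝ → ℝ^d be measurable and bounded. Then the function t ↦ I_K[x,y](t) = ∫_{−τ}^0 K(θ, x(t+θ), y(t+θ)) dθ is continuous on ℝ. -/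
open Real MeasureTheory intervalIntegral

/-- If `K : ℝ × ℝ^d × ℝ^d → ℝ^d` is continuous and `x, y : ℝ → ℝ^d` are
measurable and bounded, then `t ↦ ∫_{−τ}^0 K(θ, x(t+θ), y(t+θ)) dθ` is
continuous on `ℝ`. -/
theorem stmt2 (d : ℕ) (hd : 1 ≤ d) (τ : ℝ) (hτ : 0 < τ)
    (K : ℝ × (Fin d → ℝ) × (Fin d → ℝ) → Fin d → ℝ) (hK : Continuous K)
    (x y : ℝ → Fin d → ℝ) (hxm : Measurable x) (hym : Measurable y)
    (Cx : ℝ) (hxb : ∀ t, ‖x t‖ ≤ Cx) (Cy : ℝ) (hyb : ∀ t, ‖y t‖ ≤ Cy) :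
    Continuous (fun t : ℝ => ∫ θ in (-τ)..0, K (θ, x (t + θ), y (t + θ))) := by
  set f : ℝ → ℝ → (Fin d → ℝ) := fun r s => K (s - r, x s, y s) with hf
  -- rewrite the integral via the substitution s = t + θ
  have hrw : (fun t : ℝ => ∫ θ in (-τ)..0, K (θ, x (t + θ), y (t + θ)))
      = fun t : ℝ => ∫ s in (t - τ)..t, f t s := by
    funext t
    have h : ∀ θ : ℝ, K (θ, x (t + θ), y (t + θ)) = f t (θ + t) := by
      intro θ
      simp [hf, add_sub_cancel_right, add_comm]
    simp_rw [h]
    rw [intervalIntegral.integral_comp_add_right (fun s => f t s) t, zero_add,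
      neg_add_eq_sub]
  rw [hrw]
  -- measurability of the integrand
  have hmeas : ∀ r : ℝ, Measurable (f r) := fun r =>
    hK.measurable.comp ((measurable_id.sub measurable_const).prodMk (hxm.prodMk hym))
  -- compact set containing all relevant arguments of K
  set S : Set (ℝ × (Fin d → ℝ) × (Fin d → ℝ)) :=
    Set.Icc (-τ - 1) 1 ×ˢ (Metric.closedBall 0 Cx ×ˢ Metric.closedBall 0 Cy) with hS
  have hScomp : IsCompact S :=
    isCompact_Icc.prod ((isCompact_closedBall 0 Cx).prod (isCompact_closedBall 0 Cy))
  have hmemS : ∀ r s : ℝ, s - r ∈ Set.Icc (-τ - 1) 1 → (s - r, x s, y s) ∈ S := by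
    intro r s h
    exact ⟨h, mem_closedBall_zero_iff.mpr (hxb s), mem_closedBall_zero_iff.mpr (hyb s)⟩
  obtain ⟨M, hM⟩ := hScomp.exists_bound_of_continuousOn hK.continuousOn
  set M' := max M 0 with hM'def
  have hM'0 : (0 : ℝ) ≤ M' := le_max_right _ _
  have hbound : ∀ r s : ℝ, s - r ∈ Set.Icc (-τ - 1) 1 → ‖f r s‖ ≤ M' :=
    fun r s h => le_trans (hM _ (hmemS r s h)) (le_max_left _ _)
  -- interval integrability
  have hII : ∀ r u v : ℝ, (∀ s ∈ Set.uIcc u v, s - r ∈ Set.Icc (-τ - 1) 1) →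
      IntervalIntegrable (f r) volume u v := by
    intro r u v h
    rw [intervalIntegrable_iff]
    refine Measure.integrableOn_of_bounded ?_ (hmeas r).aestronglyMeasurable
      (M := M') ?_
    · rw [Set.uIoc]
      exact measure_Ioc_lt_top.ne
    · exact ae_restrict_of_forall_mem measurableSet_uIoc fun s hs =>
        hbound r s (h s (Set.uIoc_subset_uIcc hs))
  rw [continuous_iff_continuousAt]
  intro t₀
  rw [Metric.continuousAt_iff]
  intro ε hε
  -- uniform continuity of K on S
  have hUC := hScomp.uniformContinuousOn_of_continuous hK.continuousOn
  rw [Metric.uniformContinuousOn_iff] at hUC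
  set ε₁ := ε / (2 * τ + 2) with hε₁def
  have hε₁ : 0 < ε₁ := div_pos hε (by linarith)
  obtain ⟨δ₁, hδ₁, hUC'⟩ := hUC ε₁ hε₁
  set δ₂ := ε / (4 * M' + 4) with hδ₂def
  have hδ₂ : 0 < δ₂ := div_pos hε (by linarith)
  refine ⟨min 1 (min δ₁ δ₂), by positivity, ?_⟩
  intro t ht
  rw [Real.dist_eq] at ht
  have ht1 : |t - t₀| ≤ 1 := le_of_lt (lt_of_lt_of_le ht (min_le_left _ _))
  have htδ₁ : |t - t₀| < δ₁ :=
    lt_of_lt_of_le ht (le_trans (min_le_right _ _) (min_le_left _ _))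
  have htδ₂ : |t - t₀| < δ₂ :=
    lt_of_lt_of_le ht (le_trans (min_le_right _ _) (min_le_right _ _))
  obtain ⟨hta, htb⟩ := abs_le.mp ht1
  -- membership helper
  have hmem : ∀ u v : ℝ, t₀ - τ - 1 ≤ u → u ≤ t₀ + 1 → t₀ - τ - 1 ≤ v → v ≤ t₀ + 1 →
      ∀ s ∈ Set.uIcc u v, s - t₀ ∈ Set.Icc (-τ - 1) 1 := by
    intro u v h1 h2 h3 h4 s hs
    rcases Set.mem_uIcc.mp hs with ⟨h5, h6⟩ | ⟨h5, h6⟩ <;>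
      exact Set.mem_Icc.mpr ⟨by linarith, by linarith⟩
  have h1 : IntervalIntegrable (f t₀) volume (t - τ) (t₀ - τ) :=
    hII t₀ _ _ (hmem _ _ (by linarith) (by linarith) (by linarith) (by linarith))
  have h2 : IntervalIntegrable (f t₀) volume (t₀ - τ) t₀ :=
    hII t₀ _ _ (hmem _ _ (by linarith) (by linarith) (by linarith) (by linarith))
  have h3 : IntervalIntegrable (f t₀) volume t₀ t :=
    hII t₀ _ _ (hmem _ _ (by linarith) (by linarith) (by linarith) (by linarith))
  have h4 : IntervalIntegrable (f t₀) volume (t - τ) t := h1.trans (h2.trans h3)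
  have h5 : IntervalIntegrable (f t) volume (t - τ) t := by
    refine hII t _ _ fun s hs => ?_
    rw [Set.uIcc_of_le (by linarith : t - τ ≤ t), Set.mem_Icc] at hs
    exact Set.mem_Icc.mpr ⟨by linarith [hs.1], by linarith [hs.2]⟩
  have e2 := intervalIntegral.integral_add_adjacent_intervals h1 (h2.trans h3)
  have e3 := intervalIntegral.integral_add_adjacent_intervals h2 h3
  have esub := intervalIntegral.integral_sub h5 h4
  rw [dist_eq_norm]
  have hsplit : (∫ s in (t - τ)..t, f t s) - (∫ s in (t₀ - τ)..t₀, f t₀ s)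
      = (∫ s in (t - τ)..t, (f t s - f t₀ s)) + (∫ s in (t - τ)..(t₀ - τ), f t₀ s)
        + (∫ s in t₀..t, f t₀ s) := by
    rw [esub, ← e2, ← e3]; abel
  show ‖(∫ s in (t - τ)..t, f t s) - (∫ s in (t₀ - τ)..t₀, f t₀ s)‖ < ε
  rw [hsplit]
  -- bound the first term
  have hA : ‖∫ s in (t - τ)..t, (f t s - f t₀ s)‖ ≤ ε₁ * τ := by
    have hb : ∀ s ∈ Set.uIoc (t - τ) t, ‖f t s - f t₀ s‖ ≤ ε₁ := by
      intro s hs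
      rw [Set.uIoc_of_le (by linarith : t - τ ≤ t), Set.mem_Ioc] at hs
      have hp : (s - t, x s, y s) ∈ S :=
        hmemS t s (Set.mem_Icc.mpr ⟨by linarith [hs.1], by linarith [hs.2]⟩)
      have hq : (s - t₀, x s, y s) ∈ S :=
        hmemS t₀ s (Set.mem_Icc.mpr ⟨by linarith [hs.1], by linarith [hs.2]⟩)
      have hd : dist ((s - t, x s, y s) : ℝ × (Fin d → ℝ) × (Fin d → ℝ))
          (s - t₀, x s, y s) < δ₁ := by
        rw [Prod.dist_eq, dist_self, max_eq_left dist_nonneg, Real.dist_eq]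
        have : s - t - (s - t₀) = -(t - t₀) := by ring
        rw [this, abs_neg]
        exact htδ₁
      have := hUC' _ hp _ hq hd
      rw [dist_eq_norm] at this
      exact this.le
    calc ‖∫ s in (t - τ)..t, (f t s - f t₀ s)‖
        ≤ ε₁ * |t - (t - τ)| := intervalIntegral.norm_integral_le_of_norm_le_const hb
      _ = ε₁ * τ := by rw [show t - (t - τ) = τ by ring, abs_of_pos hτ]
  -- bound the second term
  have hB1 : ‖∫ s in (t - τ)..(t₀ - τ), f t₀ s‖ ≤ M' * |t - t₀| := by
    have hb : ∀ s ∈ Set.uIoc (t - τ) (t₀ - τ), ‖f t₀ s‖ ≤ M' := fun s hs =>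
      hbound t₀ s (hmem _ _ (by linarith) (by linarith) (by linarith) (by linarith) s
        (Set.uIoc_subset_uIcc hs))
    calc ‖∫ s in (t - τ)..(t₀ - τ), f t₀ s‖
        ≤ M' * |t₀ - τ - (t - τ)| := intervalIntegral.norm_integral_le_of_norm_le_const hb
      _ = M' * |t - t₀| := by rw [show t₀ - τ - (t - τ) = -(t - t₀) by ring, abs_neg]
  -- bound the third term
  have hB2 : ‖∫ s in t₀..t, f t₀ s‖ ≤ M' * |t - t₀| := by
    have hb : ∀ s ∈ Set.uIoc t₀ t, ‖f t₀ s‖ ≤ M' := fun s hs =>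
      hbound t₀ s (hmem _ _ (by linarith) (by linarith) (by linarith) (by linarith) s
        (Set.uIoc_subset_uIcc hs))
    exact intervalIntegral.norm_integral_le_of_norm_le_const hb
  -- combine
  have hnorm := norm_add₃_le (a := ∫ s in (t - τ)..t, (f t s - f t₀ s))
    (b := ∫ s in (t - τ)..(t₀ - τ), f t₀ s) (c := ∫ s in t₀..t, f t₀ s)
  have hAε : ε₁ * τ ≤ ε / 2 := by
    rw [hε₁def, div_mul_eq_mul_div, div_le_div_iff₀ (by linarith) two_pos]
    nlinarith
  have hBε : M' * |t - t₀| + M' * |t - t₀| < ε / 2 := by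
    have h1 : M' * |t - t₀| ≤ M' * δ₂ := mul_le_mul_of_nonneg_left htδ₂.le hM'0
    have h2 : 2 * (M' * δ₂) < ε / 2 := by
      rw [hδ₂def, show 2 * (M' * (ε / (4 * M' + 4))) = 2 * M' * ε / (4 * M' + 4) by ring,
        div_lt_div_iff₀ (by linarith) two_pos]
      nlinarith
    linarith
  calc ‖(∫ s in (t - τ)..t, (f t s - f t₀ s)) + (∫ s in (t - τ)..(t₀ - τ), f t₀ s)
        + (∫ s in t₀..t, f t₀ s)‖
      ≤ ‖∫ s in (t - τ)..t, (f t s - f t₀ s)‖ + ‖∫ s in (t - τ)..(t₀ - τ), f t₀ s‖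
        + ‖∫ s in t₀..t, f t₀ s‖ := hnorm
    _ < ε := by linarith
end

section
/- Let d ≥ 1, τ > 0, and q a natural number. If K : ℝ × ℝ^d × ℝ^d → ℝ^d is q times continuously differentiable and x, y : ℝ → ℝ^d are q times continuously differentiable, then the function t ↦ I_K[x,y](t) = ∫_{−τ}^0 K(θ, x(t+θ), y(t+θ)) dθ is q times continuously differentiable on ℝ. -/
/-!
Differentiation under the integral sign: for `G` of class `C¹` on `H × ℝ`, the partial derivative
`∂ₓG` is bounded on the compact set `closedBall x₀ 1 × [a, b]`, so dominated convergence gives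
`D (x ↦ ∫ G (x, t) dt) = ∫ ∂ₓG (x, t) dt`. Since `∂ₓG` is one degree less smooth than `G`,
induction on the order proves that parametric integrals of `Cⁿ` functions are `Cⁿ`; the theorem is the
case `G (t, θ) = K (θ, x (t + θ), y (t + θ))`.
-/

open intervalIntegral

variable {H E : Type*} [NormedAddCommGroup H] [NormedSpace ℝ H]
  [NormedAddCommGroup E] [NormedSpace ℝ E] {a b : ℝ}

theorem hasFDerivAt_parametric_intervalIntegral_of_contDiff [ProperSpace H] {G : H × ℝ → E}
    (hG : ContDiff ℝ 1 G) (x₀ : H) :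
    HasFDerivAt (fun x => ∫ t in a..b, G (x, t))
      (∫ t in a..b, (fderiv ℝ G (x₀, t)).comp (ContinuousLinearMap.inl ℝ H ℝ)) x₀ := by
  set G' : H × ℝ → H →L[ℝ] E := fun p => (fderiv ℝ G p).comp (ContinuousLinearMap.inl ℝ H ℝ)
  have hG' : Continuous G' := (contDiff_one_iff_fderiv.1 hG).2.clm_comp continuous_const
  have hG_section : ∀ x, Continuous fun t => G (x, t) := fun x =>
    hG.continuous.comp (continuous_const.prodMk continuous_id)
  obtain ⟨C, hC⟩ := ((isCompact_closedBall x₀ 1).prod isCompact_uIcc).exists_bound_of_continuousOn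
    hG'.continuousOn
  refine hasFDerivAt_integral_of_dominated_of_fderiv_le (F' := fun x t => G' (x, t))
    (bound := fun _ => C) (Metric.closedBall_mem_nhds x₀ one_pos) ?_ ?_ ?_ ?_ ?_ ?_
  · exact .of_forall fun x => (hG_section x).aestronglyMeasurable
  · exact (hG_section x₀).intervalIntegrable a b
  · exact (hG'.comp (continuous_const.prodMk continuous_id)).aestronglyMeasurable
  · exact .of_forall fun t ht x hx => hC (x, t) ⟨hx, Set.uIoc_subset_uIcc ht⟩
  · exact intervalIntegrable_const
  · exact .of_forall fun t _ x _ =>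
      ((hG.differentiable one_ne_zero) (x, t)).hasFDerivAt.comp x (hasFDerivAt_prodMk_left x t)

theorem contDiff_parametric_intervalIntegral_of_contDiff [FiniteDimensional ℝ H] {n : ℕ}
    {G : H × ℝ → E} (hG : ContDiff ℝ n G) :
    ContDiff ℝ n fun x => ∫ t in a..b, G (x, t) := by
  induction n generalizing G with
  | zero =>
    exact contDiff_zero.2 <| continuous_parametric_intervalIntegral_of_continuous'
      (f := fun x t => G (x, t)) hG.continuous a b
  | succ n ih =>
    rw [Nat.cast_succ] at hG ⊢
    have hderiv := hasFDerivAt_parametric_intervalIntegral_of_contDiff (a := a) (b := b)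
      hG.one_of_succ
    have hG' : ContDiff ℝ n (fderiv ℝ G) := (contDiff_succ_iff_fderiv.1 hG).2.2
    refine contDiff_succ_iff_fderiv_apply.2
      ⟨fun x => (hderiv x).differentiableAt, by simp, fun v => ?_⟩
    have hfderiv_apply : (fun x => fderiv ℝ (fun x => ∫ t in a..b, G (x, t)) x v) =
        fun x => ∫ t in a..b, fderiv ℝ G (x, t) (v, 0) := by
      funext x
      rw [(hderiv x).fderiv, ContinuousLinearMap.intervalIntegral_apply]
      · rfl
      · exact ((hG'.continuous.comp (continuous_const.prodMk continuous_id)).clm_comp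
          continuous_const).intervalIntegrable a b
    rw [hfderiv_apply]
    exact ih (hG'.clm_apply contDiff_const)

theorem stmt3_general (d q : ℕ) (τ : ℝ)
    (K : ℝ × (Fin d → ℝ) × (Fin d → ℝ) → Fin d → ℝ) (hK : ContDiff ℝ q K)
    (x y : ℝ → Fin d → ℝ) (hx : ContDiff ℝ q x) (hy : ContDiff ℝ q y) :
    ContDiff ℝ q (fun t : ℝ => ∫ θ in (-τ)..0, K (θ, x (t + θ), y (t + θ))) := by
  have hshift : ContDiff ℝ q fun p : ℝ × ℝ => p.1 + p.2 := contDiff_fst.add contDiff_snd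
  exact contDiff_parametric_intervalIntegral_of_contDiff <|
    hK.comp (contDiff_snd.prodMk ((hx.comp hshift).prodMk (hy.comp hshift)))

/-- If `K : ℝ × ℝ^d × ℝ^d → ℝ^d` is `q` times continuously differentiable and
`x, y : ℝ → ℝ^d` are `q` times continuously differentiable, then
`t ↦ ∫_{−τ}^0 K(θ, x(t+θ), y(t+θ)) dθ` is `q` times continuously
differentiable on `ℝ`. -/
theorem stmt3 (d q : ℕ) (hd : 1 ≤ d) (τ : ℝ) (hτ : 0 < τ)
    (K : ℝ × (Fin d → ℝ) × (Fin d → ℝ) → Fin d → ℝ) (hK : ContDiff ℝ q K)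
    (x y : ℝ → Fin d → ℝ) (hx : ContDiff ℝ q x) (hy : ContDiff ℝ q y) :
    ContDiff ℝ q (fun t : ℝ => ∫ θ in (-τ)..0, K (θ, x (t + θ), y (t + θ))) :=
  stmt3_general d q τ K hK x y hx hy
end

section
/- Let d ≥ 1, τ > 0, and let p ≥ 1 and 0 ≤ k ≤ p − 1 be integers. If K : ℝ × ℝ^d × ℝ^d → ℝ^d is p times continuously differentiable and x, y : ℝ → ℝ^d are k times continuously differentiable (continuous when k = 0), then I(t) := I_K[x,y](t) = ∫_{−τ}^0 K(θ, x(t+θ), y(t+θ)) dθ is (k+1) times continuously differentiable, and its first derivative is I'(t) = K(0, x(t), y(t)) − K(−τ, x(t−τ), y(t−τ)) − ∫_{−τ}^0 (∂₁K)(θ, x(t+θ), y(t+θ)) dθ, where ∂₁K denotes the partial derivative of K with respect to its first (scalar) argument. -/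
/-!
Substituting `u = t + θ` gives `I(t) = ∫_{t-τ}^t K(u - t, x u, y u) du`, where `t` no longer enters
`x` and `y`: it only appears in the limits and in the first, smooth, argument of `K`. The Leibniz
rule for variable limits (a consequence of the strict differentiability of the parametric
primitive `(s, v) ↦ ∫_0^v f s u du`, whose partial derivatives are continuous) then yields the
formula for `I'`, which is again a combination of `K(0, x, y)`, `K(-τ, x(· - τ), y(· - τ))` and
the delayed integral of `∂₁K`. As `∂₁K` is one order less smooth than `K`, induction on `k` gives
the regularity of `I`.
-/

open MeasureTheory intervalIntegral

section Leibniz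

open Function Set

variable {E : Type*} [NormedAddCommGroup E] [NormedSpace ℝ E] {f f' : ℝ → ℝ → E}

theorem hasDerivAt_intervalIntegral_of_continuous (hf : Continuous ↿f) (hf' : Continuous ↿f')
    (hderiv : ∀ s u, HasDerivAt (f · u) (f' s u) s) (a b s₀ : ℝ) :
    HasDerivAt (fun s => ∫ u in a..b, f s u) (∫ u in a..b, f' s₀ u) s₀ := by
  obtain ⟨C, hC⟩ := (isCompact_closedBall s₀ 1).prod isCompact_uIcc
    |>.exists_bound_of_continuousOn hf'.continuousOn
  refine (hasDerivAt_integral_of_dominated_loc_of_deriv_le (bound := fun _ => C)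
    (Metric.ball_mem_nhds s₀ one_pos) (.of_forall fun s => (hf.uncurry_left s).aestronglyMeasurable)
    ((hf.uncurry_left s₀).intervalIntegrable a b) (hf'.uncurry_left s₀).aestronglyMeasurable
    (.of_forall fun u hu s hs => hC (s, u) ⟨Metric.ball_subset_closedBall hs, uIoc_subset_uIcc hu⟩)
    intervalIntegrable_const (.of_forall fun u _ s _ => hderiv s u)).2

theorem hasStrictFDerivAt_parametric_primitive [CompleteSpace E] (hf : Continuous ↿f)
    (hf' : Continuous ↿f') (hderiv : ∀ s u, HasDerivAt (f · u) (f' s u) s) (a : ℝ) (p : ℝ × ℝ) :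
    HasStrictFDerivAt (fun p : ℝ × ℝ => ∫ u in a..p.2, f p.1 u)
      ((ContinuousLinearMap.toSpanSingleton ℝ (∫ u in a..p.2, f' p.1 u)).coprod
        (ContinuousLinearMap.toSpanSingleton ℝ (f p.1 p.2))) p := by
  refine hasStrictFDerivAt_uncurry_coprod (f := fun s v => ∫ u in a..v, f s u)
    (f₁ := fun s v => ContinuousLinearMap.toSpanSingleton ℝ (∫ u in a..v, f' s u))
    (f₂ := fun s v => ContinuousLinearMap.toSpanSingleton ℝ (f s v))
    (.of_forall fun q => ?_) (.of_forall fun q => ?_) ?_ ?_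
  · exact (hasDerivAt_intervalIntegral_of_continuous hf hf' hderiv a q.2 q.1).hasFDerivAt
  · exact (integral_hasDerivAt_right ((hf.uncurry_left q.1).intervalIntegrable _ _)
      (hf.uncurry_left q.1).aestronglyMeasurable.stronglyMeasurableAtFilter
      (hf.uncurry_left q.1).continuousAt).hasFDerivAt
  · exact ((ContinuousLinearMap.toSpanSingletonCLE (𝕜 := ℝ) (E := E)).continuous.comp
      (continuous_parametric_primitive_of_continuous hf')).continuousAt
  · exact ((ContinuousLinearMap.toSpanSingletonCLE (𝕜 := ℝ) (E := E)).continuous.comp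
      hf).continuousAt

theorem hasDerivAt_intervalIntegral_leibniz [CompleteSpace E] (hf : Continuous ↿f)
    (hf' : Continuous ↿f') (hderiv : ∀ s u, HasDerivAt (f · u) (f' s u) s)
    {a b : ℝ → ℝ} {a' b' t : ℝ} (ha : HasDerivAt a a' t) (hb : HasDerivAt b b' t) :
    HasDerivAt (fun s => ∫ u in a s..b s, f s u)
      (b' • f t (b t) - a' • f t (a t) + ∫ u in a t..b t, f' t u) t := by
  have primitive_comp : ∀ {c : ℝ → ℝ} {c' : ℝ}, HasDerivAt c c' t →
      HasDerivAt (fun s => ∫ u in (0 : ℝ)..c s, f s u)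
        ((∫ u in (0 : ℝ)..c t, f' t u) + c' • f t (c t)) t :=
    fun {c c'} hc => by
      simpa [comp_def] using
        (hasStrictFDerivAt_parametric_primitive hf hf' hderiv 0 (t, c t)).hasFDerivAt
          |>.comp_hasDerivAt t ((hasDerivAt_id t).prodMk hc)
  have hint : ∀ s v w, IntervalIntegrable (f s) volume v w := fun s v w =>
    (hf.uncurry_left s).intervalIntegrable v w
  convert (primitive_comp hb).sub (primitive_comp ha) using 1
  · funext s
    exact (integral_interval_sub_left (hint s 0 (b s)) (hint s 0 (a s))).symm
  · rw [← integral_interval_sub_left ((hf'.uncurry_left t).intervalIntegrable 0 (b t))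
      ((hf'.uncurry_left t).intervalIntegrable 0 (a t))]
    abel

end Leibniz

section PartialFst

variable {V G : Type*} [NormedAddCommGroup V] [NormedSpace ℝ V] [NormedAddCommGroup G]
  [NormedSpace ℝ G]

noncomputable def partialFst (K : ℝ × V → G) (q : ℝ × V) : G :=
  fderiv ℝ K q (1, 0)

theorem hasDerivAt_partialFst {K : ℝ × V → G} {s : ℝ} {v : V}
    (hK : DifferentiableAt ℝ K (s, v)) :
    HasDerivAt (fun s => K (s, v)) (partialFst K (s, v)) s := by
  simpa [Function.comp_def, partialFst] using
    hK.hasFDerivAt.comp_hasDerivAt s ((hasDerivAt_id s).prodMk (hasDerivAt_const s v))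

theorem ContDiff.partialFst {K : ℝ × V → G} {n : WithTop ℕ∞} (hK : ContDiff ℝ (n + 1) K) :
    ContDiff ℝ n (partialFst K) :=
  (hK.fderiv_right le_rfl).clm_apply contDiff_const

end PartialFst

section DelayedIntegral

variable {E F G : Type*} [NormedAddCommGroup G] [NormedSpace ℝ G]
  {τ : ℝ} {K : ℝ × E × F → G} {x : ℝ → E} {y : ℝ → F}

noncomputable def delayedIntegral (τ : ℝ) (K : ℝ × E × F → G) (x : ℝ → E) (y : ℝ → F)
    (t : ℝ) : G :=
  ∫ θ in (-τ)..0, K (θ, x (t + θ), y (t + θ))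

theorem delayedIntegral_eq_integral_sub (τ : ℝ) (K : ℝ × E × F → G) (x : ℝ → E) (y : ℝ → F)
    (t : ℝ) : delayedIntegral τ K x y t = ∫ u in (t - τ)..t, K (u - t, x u, y u) := by
  have shift := integral_comp_add_left (a := -τ) (b := 0) (fun u => K (u - t, x u, y u)) t
  simpa only [delayedIntegral, add_sub_cancel_left, add_zero, ← sub_eq_add_neg] using shift

variable [NormedAddCommGroup E] [NormedAddCommGroup F]

theorem continuous_delayedIntegral (hK : Continuous K) (hx : Continuous x) (hy : Continuous y) :
    Continuous (delayedIntegral τ K x y) :=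
  continuous_parametric_intervalIntegral_of_continuous' (by fun_prop) _ _

variable [NormedSpace ℝ E] [NormedSpace ℝ F]

theorem hasDerivAt_delayedIntegral [CompleteSpace G] (hK : ContDiff ℝ 1 K) (hx : Continuous x)
    (hy : Continuous y) (t : ℝ) :
    HasDerivAt (delayedIntegral τ K x y)
      (K (0, x t, y t) - K (-τ, x (t - τ), y (t - τ)) - delayedIntegral τ (partialFst K) x y t)
      t := by
  have hK' : Continuous (partialFst K) := (hK.partialFst (n := 0)).continuous
  have leibniz := hasDerivAt_intervalIntegral_leibniz (f := fun s u => K (u - s, x u, y u))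
    (f' := fun s u => -partialFst K (u - s, x u, y u)) (by fun_prop) (by fun_prop)
    (fun s u => by
      simpa [Function.comp_def] using
        (hasDerivAt_partialFst (hK.differentiable one_ne_zero _)).scomp s
          ((hasDerivAt_id s).const_sub u))
    ((hasDerivAt_id t).sub_const τ) (hasDerivAt_id t)
  rw [funext (delayedIntegral_eq_integral_sub τ K x y), delayedIntegral_eq_integral_sub]
  simpa only [id, one_smul, sub_self, sub_sub_cancel_left, intervalIntegral.integral_neg,
    ← sub_eq_add_neg] using leibniz

theorem contDiff_succ_delayedIntegral [CompleteSpace G] {k : ℕ} (hK : ContDiff ℝ (k + 1) K)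
    (hx : ContDiff ℝ k x) (hy : ContDiff ℝ k y)
    (h_partialFst : ContDiff ℝ k (delayedIntegral τ (partialFst K) x y)) :
    ContDiff ℝ (k + 1) (delayedIntegral τ K x y) := by
  have hderiv := fun t => hasDerivAt_delayedIntegral (τ := τ) (hK.of_le le_add_self)
    hx.continuous hy.continuous t
  refine contDiff_succ_iff_deriv.2 ⟨fun t => (hderiv t).differentiableAt, by simp, ?_⟩
  rw [funext fun t => (hderiv t).deriv]
  have hK' : ContDiff ℝ k K := hK.of_le le_self_add
  exact ((hK'.comp (contDiff_const.prodMk (hx.prodMk hy))).sub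
    (hK'.comp (contDiff_const.prodMk ((hx.comp (contDiff_id.sub contDiff_const)).prodMk
      (hy.comp (contDiff_id.sub contDiff_const)))))).sub h_partialFst

theorem contDiff_delayedIntegral [CompleteSpace G] (k : ℕ) (hK : ContDiff ℝ (k + 1) K)
    (hx : ContDiff ℝ k x) (hy : ContDiff ℝ k y) :
    ContDiff ℝ (k + 1) (delayedIntegral τ K x y) := by
  induction k generalizing K with
  | zero =>
    refine contDiff_succ_delayedIntegral hK hx hy (contDiff_zero.2 ?_)
    exact continuous_delayedIntegral hK.partialFst.continuous hx.continuous hy.continuous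
  | succ m ih =>
    refine contDiff_succ_delayedIntegral hK hx hy ?_
    exact_mod_cast ih (by exact_mod_cast hK.partialFst) (hx.of_le (by norm_cast; omega))
      (hy.of_le (by norm_cast; omega))

end DelayedIntegral

theorem stmt4_general (d p k : ℕ) (hp : 1 ≤ p) (hk : k ≤ p - 1)
    (τ : ℝ)
    (K : ℝ × (Fin d → ℝ) × (Fin d → ℝ) → Fin d → ℝ) (hK : ContDiff ℝ p K)
    (x y : ℝ → Fin d → ℝ) (hx : ContDiff ℝ k x) (hy : ContDiff ℝ k y) :
    ContDiff ℝ (k + 1) (fun t : ℝ => ∫ θ in (-τ)..0, K (θ, x (t + θ), y (t + θ))) ∧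
    ∀ t : ℝ, HasDerivAt (fun t : ℝ => ∫ θ in (-τ)..0, K (θ, x (t + θ), y (t + θ)))
      (K (0, x t, y t) - K (-τ, x (t - τ), y (t - τ))
        - ∫ θ in (-τ)..0, deriv (fun s : ℝ => K (s, x (t + θ), y (t + θ))) θ) t := by
  have hK' : ContDiff ℝ (k + 1) K := hK.of_le (by exact_mod_cast (by omega : k + 1 ≤ p))
  refine ⟨contDiff_delayedIntegral k hK' hx hy, fun t => ?_⟩
  have hK1 : ContDiff ℝ 1 K := hK'.of_le le_add_self
  have partialFst_eq : ∀ θ, deriv (fun s => K (s, x (t + θ), y (t + θ))) θ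
      = partialFst K (θ, x (t + θ), y (t + θ)) := fun θ =>
    (hasDerivAt_partialFst (hK1.differentiable one_ne_zero _)).deriv
  simp only [partialFst_eq]
  exact hasDerivAt_delayedIntegral hK1 hx.continuous hy.continuous t

/-- If `K` is `p` times continuously differentiable and `x, y` are `k` times
continuously differentiable with `0 ≤ k ≤ p − 1`, then
`I(t) = ∫_{−τ}^0 K(θ, x(t+θ), y(t+θ)) dθ` is `(k+1)` times continuously
differentiable and
`I'(t) = K(0, x(t), y(t)) − K(−τ, x(t−τ), y(t−τ)) − ∫_{−τ}^0 ∂₁K(θ, x(t+θ), y(t+θ)) dθ`. -/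
theorem stmt4 (d p k : ℕ) (hd : 1 ≤ d) (hp : 1 ≤ p) (hk : k ≤ p - 1)
    (τ : ℝ) (hτ : 0 < τ)
    (K : ℝ × (Fin d → ℝ) × (Fin d → ℝ) → Fin d → ℝ) (hK : ContDiff ℝ p K)
    (x y : ℝ → Fin d → ℝ) (hx : ContDiff ℝ k x) (hy : ContDiff ℝ k y) :
    ContDiff ℝ (k + 1) (fun t : ℝ => ∫ θ in (-τ)..0, K (θ, x (t + θ), y (t + θ))) ∧
    ∀ t : ℝ, HasDerivAt (fun t : ℝ => ∫ θ in (-τ)..0, K (θ, x (t + θ), y (t + θ)))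
      (K (0, x t, y t) - K (-τ, x (t - τ), y (t - τ))
        - ∫ θ in (-τ)..0, deriv (fun s : ℝ => K (s, x (t + θ), y (t + θ))) θ) t :=
  stmt4_general d p k hp hk τ K hK x y hx hy
end

section
/- Let d ≥ 1, τ > 0, let K : ℝ × ℝ^d × ℝ^d → ℝ^d be continuously differentiable, let x, y : ℝ → ℝ^d be continuous, and fix t ∈ ℝ. Define g : (0, ∞) → ℝ^d by g(ω) := ω · ∫_{−τ/ω}^0 K(ωθ, x(t+θ), y(t+θ)) dθ. Then g is differentiable at every ω > 0, with g'(ω) = ∫_{−τ/ω}^0 K(ωθ, x(t+θ), y(t+θ)) dθ − (τ/ω)·K(−τ, x(t−τ/ω), y(t−τ/ω)) + ω · ∫_{−τ/ω}^0 (∂₁K)(ωθ, x(t+θ), y(t+θ)) · θ dθ, where ∂₁K denotes the partial derivative of K with respect to its first (scalar) argument. (This is the term M_X appearing in the Fréchet derivative of the rescaled right-hand side with respect to the period.) -/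
/-!
Put `Φ(a, b) = ∫_a^0 F(b, θ) dθ` with `F(b, θ) = K(bθ, x(t+θ), y(t+θ))`, so that the function
to differentiate is `ω ↦ ω • Φ(-τ/ω, ω)`. Since `x` and `y` are only continuous, the moving
endpoint cannot be substituted away; instead `Φ` has the continuous partial derivatives
`∂ₐΦ = -F(b, a)` (fundamental theorem of calculus) and `∂_bΦ = ∫_a^0 ∂_bF(b, θ) dθ`
(differentiation under the integral sign, dominated by compactness), hence is strictly
differentiable. The chain rule along `ω ↦ (-τ/ω, ω)` and the product rule give the formula.
-/

open intervalIntegral Filter ContinuousLinearMap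

section ParametricIntegral

variable {E : Type*} [NormedAddCommGroup E] [NormedSpace ℝ E] {F F' : ℝ → ℝ → E}

theorem hasDerivAt_intervalIntegral_of_continuous_deriv (hF : Continuous F.uncurry)
    (hF' : Continuous F'.uncurry) (hder : ∀ b θ, HasDerivAt (F · θ) (F' b θ) b) (a c b : ℝ) :
    HasDerivAt (fun b => ∫ θ in a..c, F b θ) (∫ θ in a..c, F' b θ) b := by
  obtain ⟨C, hC⟩ := ((ProperSpace.isCompact_closedBall b 1).prod
    isCompact_uIcc).exists_bound_of_continuousOn hF'.continuousOn
  exact (intervalIntegral.hasDerivAt_integral_of_dominated_loc_of_deriv_le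
    (bound := fun _ => C) (Metric.ball_mem_nhds b one_pos)
    (Eventually.of_forall fun b => (hF.uncurry_left b).aestronglyMeasurable)
    ((hF.uncurry_left b).intervalIntegrable _ _)
    (hF'.uncurry_left b).aestronglyMeasurable
    (Eventually.of_forall fun θ hθ b' hb' =>
      hC (b', θ) ⟨Metric.ball_subset_closedBall hb', Set.uIoc_subset_uIcc hθ⟩)
    intervalIntegrable_const
    (Eventually.of_forall fun θ _ b' _ => hder b' θ)).2

theorem continuous_intervalIntegral_lower_param (hF : Continuous F.uncurry) (c : ℝ) :
    Continuous fun p : ℝ × ℝ => ∫ θ in p.1..c, F p.2 θ := by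
  simp_rw [integral_symm c]
  exact (continuous_parametric_intervalIntegral_of_continuous (f := fun p : ℝ × ℝ => F p.2)
    (hF.comp (by fun_prop : Continuous fun q : (ℝ × ℝ) × ℝ => (q.1.2, q.2)))
    continuous_fst).neg

theorem hasStrictFDerivAt_intervalIntegral_lower_param [CompleteSpace E]
    (hF : Continuous F.uncurry) (hF' : Continuous F'.uncurry)
    (hder : ∀ b θ, HasDerivAt (F · θ) (F' b θ) b) (a b c : ℝ) :
    HasStrictFDerivAt (fun p : ℝ × ℝ => ∫ θ in p.1..c, F p.2 θ)
      ((toSpanSingleton ℝ (-F b a)).coprod (toSpanSingleton ℝ (∫ θ in a..c, F' b θ))) (a, b) :=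
  hasStrictFDerivAt_uncurry_coprod (u := (a, b)) (f := fun a b => ∫ θ in a..c, F b θ)
    (f₁ := fun a b => toSpanSingleton ℝ (-F b a))
    (f₂ := fun a b => toSpanSingleton ℝ (∫ θ in a..c, F' b θ))
    (Eventually.of_forall fun p => integral_hasDerivAt_left
      ((hF.uncurry_left p.2).intervalIntegrable _ _)
      ((hF.uncurry_left p.2).stronglyMeasurableAtFilter _ _) (hF.uncurry_left p.2).continuousAt)
    (Eventually.of_forall fun _ =>
      hasDerivAt_intervalIntegral_of_continuous_deriv hF hF' hder _ _ _)
    (toSpanSingletonCLE.continuous.comp (hF.comp continuous_swap).neg).continuousAt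
    (toSpanSingletonCLE.continuous.comp
      (continuous_intervalIntegral_lower_param hF' c)).continuousAt

theorem HasDerivAt.intervalIntegral_lower_param [CompleteSpace E]
    (hF : Continuous F.uncurry) (hF' : Continuous F'.uncurry)
    (hder : ∀ b θ, HasDerivAt (F · θ) (F' b θ) b)
    {e : ℝ → ℝ} {e' ω : ℝ} (he : HasDerivAt e e' ω) (c : ℝ) :
    HasDerivAt (fun ω => ∫ θ in e ω..c, F ω θ)
      ((∫ θ in e ω..c, F' ω θ) - e' • F ω (e ω)) ω := by
  have hcurve : HasDerivAt (fun ω => (e ω, ω)) (e', 1) ω := he.prodMk (hasDerivAt_id ω)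
  refine ((hasStrictFDerivAt_intervalIntegral_lower_param hF hF' hder (e ω) ω c).hasFDerivAt
    |>.comp_hasDerivAt (f := fun ω => (e ω, ω)) ω hcurve).congr_deriv ?_
  simp only [coprod_apply, toSpanSingleton_apply, smul_neg, one_smul]
  abel

end ParametricIntegral

section PartialDeriv

variable {G E : Type*} [NormedAddCommGroup G] [NormedSpace ℝ G] [NormedAddCommGroup E]
  [NormedSpace ℝ E] {K : ℝ × G → E}

theorem ContDiff.hasDerivAt_slice_fst (hK : ContDiff ℝ 1 K) (s : ℝ) (v : G) :
    HasDerivAt (fun s => K (s, v)) (fderiv ℝ K (s, v) (1, 0)) s :=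
  (hK.differentiable one_ne_zero (s, v)).hasFDerivAt.comp_hasDerivAt s
    ((hasDerivAt_id s).prodMk (hasDerivAt_const s v))

theorem ContDiff.continuous_deriv_slice_fst (hK : ContDiff ℝ 1 K) :
    Continuous fun p : ℝ × G => deriv (fun s => K (s, p.2)) p.1 := by
  simp_rw [fun p : ℝ × G => (hK.hasDerivAt_slice_fst p.1 p.2).deriv]
  exact (hK.continuous_fderiv one_ne_zero).clm_apply continuous_const

end PartialDeriv

theorem stmt5_general (d : ℕ) (τ : ℝ)
    (K : ℝ × (Fin d → ℝ) × (Fin d → ℝ) → Fin d → ℝ) (hK : ContDiff ℝ 1 K)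
    (x y : ℝ → Fin d → ℝ) (hx : Continuous x) (hy : Continuous y)
    (t ω : ℝ) (hω : 0 < ω) :
    HasDerivAt
      (fun ω' : ℝ => ω' • ∫ θ in (-(τ/ω'))..0, K (ω' * θ, x (t + θ), y (t + θ)))
      ((∫ θ in (-(τ/ω))..0, K (ω * θ, x (t + θ), y (t + θ)))
        - (τ/ω) • K (-τ, x (t - τ/ω), y (t - τ/ω))
        + ω • ∫ θ in (-(τ/ω))..0,
            θ • deriv (fun s : ℝ => K (s, x (t + θ), y (t + θ))) (ω * θ)) ω := by
  set D₁K := fun p : ℝ × (Fin d → ℝ) × (Fin d → ℝ) => deriv (fun s => K (s, p.2)) p.1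
  have hKc := hK.continuous
  have hD₁K := hK.continuous_deriv_slice_fst
  have hder (b θ : ℝ) : HasDerivAt (fun b => K (b * θ, x (t + θ), y (t + θ)))
      (θ • D₁K (b * θ, x (t + θ), y (t + θ))) b :=
    (hK.hasDerivAt_slice_fst _ _).differentiableAt.hasDerivAt.scomp b (hasDerivAt_mul_const θ)
  have he : HasDerivAt (fun ω' => -(τ / ω')) (τ / ω ^ 2) ω := by
    simpa [div_eq_mul_inv] using ((hasDerivAt_inv hω.ne').const_mul τ).fun_neg
  have hI := HasDerivAt.intervalIntegral_lower_param (by fun_prop) (by fun_prop) hder he 0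
  refine ((hasDerivAt_id ω).smul hI).congr_deriv ?_
  have hω' : ω * -(τ / ω) = -τ := by field_simp
  simp only [id, one_smul, smul_sub, smul_smul, hω', ← sub_eq_add_neg]
  rw [show ω * (τ / ω ^ 2) = τ / ω by field_simp]
  abel

/-- Differentiability with respect to the (unknown) period `ω` of the rescaled
delayed integral `g(ω) = ω ∫_{−τ/ω}^0 K(ωθ, x(t+θ), y(t+θ)) dθ`, with the
derivative given by the term `M_X` of the Fréchet derivative of the rescaled
right-hand side. -/
theorem stmt5 (d : ℕ) (hd : 1 ≤ d) (τ : ℝ) (hτ : 0 < τ)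
    (K : ℝ × (Fin d → ℝ) × (Fin d → ℝ) → Fin d → ℝ) (hK : ContDiff ℝ 1 K)
    (x y : ℝ → Fin d → ℝ) (hx : Continuous x) (hy : Continuous y)
    (t ω : ℝ) (hω : 0 < ω) :
    HasDerivAt
      (fun ω' : ℝ => ω' • ∫ θ in (-(τ/ω'))..0, K (ω' * θ, x (t + θ), y (t + θ)))
      ((∫ θ in (-(τ/ω))..0, K (ω * θ, x (t + θ), y (t + θ)))
        - (τ/ω) • K (-τ, x (t - τ/ω), y (t - τ/ω))
        + ω • ∫ θ in (-(τ/ω))..0,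
            θ • deriv (fun s : ℝ => K (s, x (t + θ), y (t + θ))) (ω * θ)) ω :=
  stmt5_general d τ K hK x y hx hy t ω hω
end

section
/- Let d ≥ 1, τ > 0, ω > 0, and let p ≥ 1 be an integer. Assume K, H : ℝ × ℝ^d × ℝ^d → ℝ^d are p times continuously differentiable and F̃, G̃ : ℝ^d × ℝ^d → ℝ^d are (p+1) times continuously differentiable. Let x : ℝ → ℝ^d be measurable and bounded, let y : ℝ → ℝ^d be differentiable, suppose x and y are ω-periodic, and suppose that for all t ∈ ℝ: x(t) = F̃( ∫_{−τ}^0 K(θ, x(t+θ), y(t+θ)) dθ, y(t) ) and y'(t) = G̃( ∫_{−τ}^0 H(θ, x(t+θ), y(t+θ)) dθ, y(t) ). Then x is p times continuously differentiable and y is (p+1) times continuously differentiable on ℝ. -/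
/-!
Substituting `s = t + θ` writes each delay integral as
`N(t) = ∫_{t-τ}^t Q(s - t, g s) ds` with `g = (x, y)`, where `t` enters only through the limits
and the smooth first argument of `Q`. So `N` is continuous as soon as `g` is locally bounded and
measurable (dominated convergence), and the Leibniz rule gives
`N' = Q(0, g t) - Q(-τ, g (t - τ)) - N_{∂₁Q}`, so `N` is one derivative smoother than `g` as long
as `Q` allows. Starting from continuity, the equations `x = F̃(N_K, y)`, `y' = G̃(N_H, y)` then
raise the regularity of `x` and `y` one order at a time until the smoothness `p` of the kernels.
-/

open Real MeasureTheory intervalIntegral Set Filter Topology Function Interval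

section General

variable {E : Type*} [NormedAddCommGroup E] [NormedSpace ℝ E] [CompleteSpace E]

theorem ContinuousAt.indicator_of_notMem_frontier {α β : Type*} [TopologicalSpace α]
    [TopologicalSpace β] [Zero β] {s : Set α} {f : α → β} {a : α} (hf : ContinuousAt f a)
    (ha : a ∉ frontier s) : ContinuousAt (s.indicator f) a := by
  by_cases has : a ∈ interior s
  · exact hf.congr <| eventually_of_mem (mem_interior_iff_mem_nhds.1 has)
      fun b hb => (indicator_of_mem hb f).symm
  · have hsc : sᶜ ∈ 𝓝 a := by
      rw [← mem_interior_iff_mem_nhds, interior_compl]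
      exact fun hcl => ha ⟨hcl, has⟩
    exact continuousAt_const.congr <| eventually_of_mem hsc
      fun b hb => (indicator_of_notMem hb f).symm

theorem indicator_Ioc_sub_eq_indicator_Ico {M : Type*} [Zero M] (τ : ℝ) (f : ℝ → ℝ → M)
    (s t : ℝ) : (Ioc (t - τ) t).indicator (f t) s = (Ico s (s + τ)).indicator (f · s) t := by
  simp only [indicator_apply, mem_Ioc, mem_Ico, sub_lt_iff_lt_add', and_comm]
  rw [add_comm]

theorem hasDerivAt_integral_shifted_upper_limit {q : ℝ → ℝ → E} (hq : Continuous (uncurry q))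
    (t₀ c : ℝ) :
    HasDerivAt (fun t => ∫ s in (t₀ + c)..(t + c), q t s) (q t₀ (t₀ + c)) t₀ := by
  rw [hasDerivAt_iff_isLittleO, Asymptotics.isLittleO_iff]
  intro ε hε
  obtain ⟨δ, hδ, hclose⟩ := Metric.continuousAt_iff.1 (hq.continuousAt (x := (t₀, t₀ + c))) ε hε
  filter_upwards [Metric.ball_mem_nhds t₀ hδ] with t ht
  rw [Metric.mem_ball, Real.dist_eq] at ht
  have hconst : (t - t₀) • q t₀ (t₀ + c) = ∫ _ in (t₀ + c)..(t + c), q t₀ (t₀ + c) := by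
    rw [intervalIntegral.integral_const, add_sub_add_right_eq_sub]
  have hint : IntervalIntegrable (q t) volume (t₀ + c) (t + c) :=
    (hq.comp (Continuous.prodMk_right t)).intervalIntegrable _ _
  rw [integral_same, sub_zero, hconst, ← integral_sub hint intervalIntegrable_const]
  have hbound : ∀ s ∈ Ι (t₀ + c) (t + c), ‖q t s - q t₀ (t₀ + c)‖ ≤ ε := by
    intro s hs
    have hs' : |s - (t₀ + c)| ≤ |t - t₀| := by
      simpa [add_sub_add_right_eq_sub] using abs_sub_left_of_mem_uIcc (uIoc_subset_uIcc hs)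
    rw [← dist_eq_norm]
    refine (hclose (x := (t, s)) ?_).le
    rw [Prod.dist_eq, Real.dist_eq, Real.dist_eq]
    exact max_lt ht (hs'.trans_lt ht)
  calc ‖∫ s in (t₀ + c)..(t + c), (q t s - q t₀ (t₀ + c))‖
      ≤ ε * |(t + c) - (t₀ + c)| := norm_integral_le_of_norm_le_const hbound
    _ = ε * ‖t - t₀‖ := by rw [add_sub_add_right_eq_sub, Real.norm_eq_abs]

theorem hasDerivAt_integral_leibniz {q q' : ℝ → ℝ → E} (hq : Continuous (uncurry q))
    (hq' : Continuous (uncurry q')) (hderiv : ∀ σ s, HasDerivAt (q · s) (q' σ s) σ)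
    (a c t₀ : ℝ) :
    HasDerivAt (fun t => ∫ s in a..(t + c), q t s)
      (q t₀ (t₀ + c) + ∫ s in a..(t₀ + c), q' t₀ s) t₀ := by
  have hint : ∀ t u v, IntervalIntegrable (q t) volume u v := fun t u v =>
    (hq.comp (Continuous.prodMk_right t)).intervalIntegrable u v
  have hsplit : (fun t => ∫ s in a..(t + c), q t s) =
      fun t => (∫ s in a..(t₀ + c), q t s) + ∫ s in (t₀ + c)..(t + c), q t s :=
    funext fun t => (integral_add_adjacent_intervals (hint t _ _) (hint t _ _)).symm
  rw [hsplit, add_comm (q t₀ _)]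
  refine HasDerivAt.add ?_ (hasDerivAt_integral_shifted_upper_limit hq t₀ c)
  obtain ⟨B, hB⟩ := (isCompact_Icc.prod isCompact_uIcc).exists_bound_of_continuousOn
    (s := Icc (t₀ - 1) (t₀ + 1) ×ˢ [[a, t₀ + c]]) hq'.continuousOn
  refine (hasDerivAt_integral_of_dominated_loc_of_deriv_le (bound := fun _ => B)
    (Icc_mem_nhds (sub_one_lt t₀) (lt_add_one t₀))
    (Eventually.of_forall fun t => (hq.comp (Continuous.prodMk_right t)).aestronglyMeasurable)
    (hint t₀ _ _) (hq'.comp (Continuous.prodMk_right t₀)).aestronglyMeasurable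
    (ae_of_all _ fun s hs t ht => hB (t, s) ⟨ht, uIoc_subset_uIcc hs⟩)
    intervalIntegrable_const (ae_of_all _ fun s _ t _ => hderiv t s)).2

end General

section DelayIntegral

variable {E F : Type*} [NormedAddCommGroup E] [NormedSpace ℝ E]

noncomputable def delayIntegral (τ : ℝ) (Q : ℝ × F → E) (g : ℝ → F) (t : ℝ) : E :=
  ∫ s in (t - τ)..t, Q (s - t, g s)

theorem integral_comp_add_eq_delayIntegral (τ : ℝ) (Q : ℝ × F → E) (g : ℝ → F) (t : ℝ) :
    ∫ θ in (-τ)..0, Q (θ, g (t + θ)) = delayIntegral τ Q g t := by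
  simpa [delayIntegral, add_comm t, sub_eq_neg_add] using
    (integral_comp_add_right (fun s => Q (s - t, g s)) t (a := -τ) (b := 0))

variable [NormedAddCommGroup F]

theorem continuous_delayIntegral [ProperSpace F] {τ : ℝ} (hτ : 0 < τ) {Q : ℝ × F → E}
    {g : ℝ → F} (hQ : Continuous Q) (hg : AEStronglyMeasurable g)
    (hgb : ∀ a b, Bornology.IsBounded (g '' Icc a b)) :
    Continuous (delayIntegral τ Q g) := by
  set f : ℝ → ℝ → E := fun t s => Q (s - t, g s)
  have hN : delayIntegral τ Q g = fun t => ∫ s, (Ioc (t - τ) t).indicator (f t) s := by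
    ext t
    rw [delayIntegral, integral_of_le (by linarith),
      MeasureTheory.integral_indicator measurableSet_Ioc]
  rw [hN, continuous_iff_continuousAt]
  intro t₀
  set J := Ioc (t₀ - τ - 1) (t₀ + 1)
  obtain ⟨B, hB⟩ := (isCompact_Icc.prod (hgb (t₀ - τ - 1) (t₀ + 1)).isCompact_closure
    ).exists_bound_of_continuousOn (s := Icc (-τ) 0 ×ˢ _) hQ.continuousOn
  refine continuousAt_of_dominated (bound := J.indicator fun _ => max B 0) ?_ ?_ ?_ ?_
  · exact Eventually.of_forall fun t => (hQ.comp_aestronglyMeasurable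
      ((measurable_id.sub_const t).aestronglyMeasurable.prodMk hg)).indicator measurableSet_Ioc
  · filter_upwards [Ioo_mem_nhds (sub_one_lt t₀) (lt_add_one t₀)] with t ht
    refine ae_of_all _ fun s => ?_
    by_cases hs : s ∈ Ioc (t - τ) t
    · have hsJ : s ∈ J := ⟨by linarith [hs.1, ht.1], by linarith [hs.2, ht.2]⟩
      rw [indicator_of_mem hs, indicator_of_mem hsJ]
      refine (hB _ ⟨⟨by linarith [hs.1], by linarith [hs.2]⟩, ?_⟩).trans (le_max_left _ _)
      exact subset_closure (mem_image_of_mem g (Ioc_subset_Icc_self hsJ))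
    · rw [indicator_of_notMem hs, norm_zero]
      exact indicator_nonneg (fun _ _ => le_max_right _ _) s
  · exact (integrable_indicator_iff measurableSet_Ioc).2 (integrableOn_const measure_Ioc_lt_top.ne)
  -- For fixed `s`, the integrand is continuous in `t` except for jumps at `t = s` and `t = s + τ`.
  · filter_upwards [(Set.toFinite {t₀, t₀ - τ}).countable.ae_notMem volume] with s hs
    simp only [indicator_Ioc_sub_eq_indicator_Ico τ f s]
    refine ContinuousAt.indicator_of_notMem_frontier ?_ ?_
    · exact (hQ.comp ((continuous_const.sub continuous_id).prodMk continuous_const)).continuousAt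
    · rw [frontier_Ico (lt_add_of_pos_right s hτ)]
      simp only [mem_insert_iff, mem_singleton_iff, not_or] at hs ⊢
      exact ⟨fun h => hs.1 h.symm, fun h => hs.2 (by linarith)⟩

variable [NormedSpace ℝ F]

noncomputable def fstDeriv (Q : ℝ × F → E) (z : ℝ × F) : E :=
  fderiv ℝ Q z (1, 0)

theorem contDiff_fstDeriv {n : ℕ} {Q : ℝ × F → E} (hQ : ContDiff ℝ (n + 1) Q) :
    ContDiff ℝ n (fstDeriv Q) :=
  (hQ.fderiv_right le_rfl).clm_apply contDiff_const

variable [CompleteSpace E]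

theorem hasDerivAt_delayIntegral {τ : ℝ} {Q : ℝ × F → E} {g : ℝ → F} (hQ : ContDiff ℝ 1 Q)
    (hg : Continuous g) (t : ℝ) :
    HasDerivAt (delayIntegral τ Q g)
      (Q (0, g t) - Q (-τ, g (t - τ)) - delayIntegral τ (fstDeriv Q) g t) t := by
  set q : ℝ → ℝ → E := fun σ s => Q (s - σ, g s)
  have hpath : Continuous fun p : ℝ × ℝ => (p.2 - p.1, g p.2) :=
    (continuous_snd.sub continuous_fst).prodMk (hg.comp continuous_snd)
  have hq : Continuous (uncurry q) := hQ.continuous.comp hpath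
  have hfst : Continuous fun p : ℝ × ℝ => fstDeriv Q (p.2 - p.1, g p.2) :=
    ((hQ.continuous_fderiv one_ne_zero).clm_apply continuous_const).comp hpath
  have hq' : Continuous (uncurry fun σ s => -fstDeriv Q (s - σ, g s)) := hfst.neg
  have hderiv : ∀ σ s, HasDerivAt (q · s) (-fstDeriv Q (s - σ, g s)) σ := by
    intro σ s
    have hQd := (hQ.differentiable one_ne_zero (s - σ, g s)).hasFDerivAt
    have := hQd.comp_hasDerivAt σ
      (((hasDerivAt_id σ).const_sub s).prodMk (hasDerivAt_const σ (g s)))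
    rwa [show ((-1 : ℝ), (0 : F)) = -(1, 0) by simp, map_neg] at this
  have hint : ∀ t u v, IntervalIntegrable (q t) volume u v := fun t u v =>
    (hq.comp (Continuous.prodMk_right t)).intervalIntegrable u v
  have hsplit : delayIntegral τ Q g =
      fun t => (∫ s in (0 : ℝ)..(t + 0), q t s) - ∫ s in (0 : ℝ)..(t + -τ), q t s := by
    ext t
    rw [add_zero, ← sub_eq_add_neg, integral_interval_sub_left (hint t _ _) (hint t _ _)]
    rfl
  rw [hsplit]
  convert (hasDerivAt_integral_leibniz hq hq' hderiv 0 0 t).sub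
    (hasDerivAt_integral_leibniz hq hq' hderiv 0 (-τ) t) using 1
  · rfl
  have hint' : ∀ u v, IntervalIntegrable (fun s => fstDeriv Q (s - t, g s)) volume u v :=
    fun u v => (hfst.comp (Continuous.prodMk_right t)).intervalIntegrable u v
  rw [intervalIntegral.integral_neg, intervalIntegral.integral_neg, delayIntegral,
    ← integral_interval_sub_left (hint' 0 t) (hint' 0 (t - τ))]
  simp only [q, add_zero, ← sub_eq_add_neg, sub_self, sub_sub_cancel_left]
  abel

theorem contDiff_delayIntegral_of_fstDeriv {τ : ℝ} {Q : ℝ × F → E} {g : ℝ → F} {n : ℕ}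
    (hQ : ContDiff ℝ (n + 1) Q) (hg : ContDiff ℝ n g)
    (hQ' : ContDiff ℝ n (delayIntegral τ (fstDeriv Q) g)) :
    ContDiff ℝ (n + 1) (delayIntegral τ Q g) := by
  have hderiv := hasDerivAt_delayIntegral (τ := τ) (hQ.of_le le_add_self) hg.continuous
  have hQn : ContDiff ℝ n Q := hQ.of_le le_self_add
  refine contDiff_succ_iff_deriv.2 ⟨fun t => (hderiv t).differentiableAt, by simp, ?_⟩
  rw [funext fun t => (hderiv t).deriv]
  exact ((hQn.comp (contDiff_const.prodMk hg)).sub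
    (hQn.comp (contDiff_const.prodMk (hg.comp (contDiff_id.sub contDiff_const))))).sub hQ'

theorem contDiff_delayIntegral [ProperSpace F] {τ : ℝ} (hτ : 0 < τ) {Q : ℝ × F → E} {g : ℝ → F}
    {n : ℕ} (hQ : ContDiff ℝ (n + 1) Q) (hg : ContDiff ℝ n g) :
    ContDiff ℝ (n + 1) (delayIntegral τ Q g) := by
  induction n generalizing Q with
  | zero =>
    refine contDiff_delayIntegral_of_fstDeriv hQ hg (contDiff_zero.2 ?_)
    exact continuous_delayIntegral hτ (contDiff_fstDeriv hQ).continuous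
      hg.continuous.aestronglyMeasurable fun a b => (isCompact_Icc.image hg.continuous).isBounded
  | succ n ih =>
    exact contDiff_delayIntegral_of_fstDeriv hQ hg (ih (contDiff_fstDeriv hQ) (hg.of_le (by simp)))

end DelayIntegral

theorem contDiff_of_delayIntegral_system {X Y V W : Type*} [NormedAddCommGroup X]
    [NormedSpace ℝ X] [ProperSpace X] [NormedAddCommGroup Y] [NormedSpace ℝ Y] [ProperSpace Y]
    [NormedAddCommGroup V] [NormedSpace ℝ V] [CompleteSpace V] [NormedAddCommGroup W]
    [NormedSpace ℝ W] [CompleteSpace W] {p : ℕ} {τ : ℝ} (hτ : 0 < τ) {K : ℝ × X × Y → V}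
    {H : ℝ × X × Y → W} {F : V × Y → X} {G : W × Y → Y} (hK : ContDiff ℝ p K)
    (hH : ContDiff ℝ p H) (hF : ContDiff ℝ (p + 1) F) (hG : ContDiff ℝ (p + 1) G) {x : ℝ → X}
    {y : ℝ → Y} (hxm : AEStronglyMeasurable x) {C : ℝ} (hxb : ∀ t, ‖x t‖ ≤ C)
    (hyd : Differentiable ℝ y)
    (hx : x = fun t => F (delayIntegral τ K (fun s => (x s, y s)) t, y t))
    (hy : deriv y = fun t => G (delayIntegral τ H (fun s => (x s, y s)) t, y t)) :
    ContDiff ℝ p x ∧ ContDiff ℝ (p + 1) y := by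
  set g : ℝ → X × Y := fun s => (x s, y s)
  have hstep : ∀ k : ℕ, k ≤ p → ContDiff ℝ k (delayIntegral τ K g) →
      ContDiff ℝ k (delayIntegral τ H g) → ContDiff ℝ k y →
      ContDiff ℝ k x ∧ ContDiff ℝ (k + 1) y := by
    intro k hk hNK hNH hyk
    have hkp : (k : WithTop ℕ∞) ≤ p + 1 := by exact_mod_cast hk.trans (Nat.le_succ p)
    refine ⟨hx ▸ (hF.of_le hkp).comp (hNK.prodMk hyk), contDiff_succ_iff_deriv.2 ⟨hyd, by simp, ?_⟩⟩
    exact hy ▸ (hG.of_le hkp).comp (hNH.prodMk hyk)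
  have hgm : AEStronglyMeasurable g := hxm.prodMk hyd.continuous.aestronglyMeasurable
  have hgb : ∀ a b, Bornology.IsBounded (g '' Icc a b) := fun a b =>
    ((isBounded_iff_forall_norm_le.2 ⟨C, by rintro _ ⟨t, -, rfl⟩; exact hxb t⟩).prod
      (isCompact_Icc.image hyd.continuous).isBounded).subset
      (image_subset_iff.2 fun t ht => ⟨mem_image_of_mem x ht, mem_image_of_mem y ht⟩)
  suffices ∀ k : ℕ, k ≤ p → ContDiff ℝ k x ∧ ContDiff ℝ (k + 1) y from this p le_rfl
  intro k
  induction k with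
  | zero =>
    intro h0
    refine hstep 0 h0 ?_ ?_ (contDiff_zero.2 hyd.continuous) <;> refine contDiff_zero.2 ?_
    exacts [continuous_delayIntegral hτ hK.continuous hgm hgb,
      continuous_delayIntegral hτ hH.continuous hgm hgb]
  | succ k ih =>
    intro hk
    obtain ⟨hxk, hyk⟩ := ih (Nat.le_of_succ_le hk)
    have hgk : ContDiff ℝ k g := hxk.prodMk (hyk.of_le le_self_add)
    have hkp : ((k + 1 : ℕ) : WithTop ℕ∞) ≤ p := by exact_mod_cast hk
    push_cast at hkp ⊢
    exact hstep (k + 1) hk (contDiff_delayIntegral hτ (hK.of_le hkp) hgk)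
      (contDiff_delayIntegral hτ (hH.of_le hkp) hgk) hyk

theorem stmt7_general (d p : ℕ)
    (τ : ℝ) (hτ : 0 < τ)
    (K H : ℝ × (Fin d → ℝ) × (Fin d → ℝ) → Fin d → ℝ)
    (hK : ContDiff ℝ p K) (hH : ContDiff ℝ p H)
    (Ftil Gtil : (Fin d → ℝ) × (Fin d → ℝ) → Fin d → ℝ)
    (hF : ContDiff ℝ (p + 1) Ftil) (hG : ContDiff ℝ (p + 1) Gtil)
    (x y : ℝ → Fin d → ℝ)
    (hxm : Measurable x) (C : ℝ) (hxb : ∀ t, ‖x t‖ ≤ C)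
    (hyd : Differentiable ℝ y)
    (hxe : ∀ t : ℝ, x t = Ftil (∫ θ in (-τ)..0, K (θ, x (t + θ), y (t + θ)), y t))
    (hye : ∀ t : ℝ, deriv y t = Gtil (∫ θ in (-τ)..0, H (θ, x (t + θ), y (t + θ)), y t)) :
    ContDiff ℝ p x ∧ ContDiff ℝ (p + 1) y :=
  contDiff_of_delayIntegral_system hτ hK hH hF hG hxm.aestronglyMeasurable hxb hyd
    (funext fun t => (hxe t).trans (by rw [← integral_comp_add_eq_delayIntegral]))
    (funext fun t => (hye t).trans (by rw [← integral_comp_add_eq_delayIntegral]))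

/-- Regularity of periodic solutions of the coupled renewal/delay system: if
`K, H` are `p` times continuously differentiable, `F̃, G̃` are `(p+1)` times
continuously differentiable, and `(x, y)` is a bounded measurable/differentiable
`ω`-periodic solution of the coupled system, then `x ∈ C^p` and `y ∈ C^{p+1}`. -/
theorem stmt7 (d p : ℕ) (hd : 1 ≤ d) (hp : 1 ≤ p)
    (τ ω : ℝ) (hτ : 0 < τ) (hω : 0 < ω)
    (K H : ℝ × (Fin d → ℝ) × (Fin d → ℝ) → Fin d → ℝ)
    (hK : ContDiff ℝ p K) (hH : ContDiff ℝ p H)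
    (Ftil Gtil : (Fin d → ℝ) × (Fin d → ℝ) → Fin d → ℝ)
    (hF : ContDiff ℝ (p + 1) Ftil) (hG : ContDiff ℝ (p + 1) Gtil)
    (x y : ℝ → Fin d → ℝ)
    (hxm : Measurable x) (C : ℝ) (hxb : ∀ t, ‖x t‖ ≤ C)
    (hyd : Differentiable ℝ y)
    (hxp : Function.Periodic x ω) (hyp : Function.Periodic y ω)
    (hxe : ∀ t : ℝ, x t = Ftil (∫ θ in (-τ)..0, K (θ, x (t + θ), y (t + θ)), y t))
    (hye : ∀ t : ℝ, deriv y t = Gtil (∫ θ in (-τ)..0, H (θ, x (t + θ), y (t + θ)), y t)) :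
    ContDiff ℝ p x ∧ ContDiff ℝ (p + 1) y :=
  stmt7_general d p τ hτ K H hK hH Ftil Gtil hF hG x y hxm C hxb hyd hxe hye
end

section
/- Let d ≥ 1, τ > 0, ω > 0. Assume K, H : ℝ × ℝ^d × ℝ^d → ℝ^d are continuous and F̃, G̃ : ℝ^d × ℝ^d → ℝ^d are continuous. Let x : ℝ → ℝ^d be measurable and bounded, let y : ℝ → ℝ^d be differentiable, suppose x and y are ω-periodic, and suppose that for all t ∈ ℝ: x(t) = F̃( ∫_{−τ}^0 K(θ, x(t+θ), y(t+θ)) dθ, y(t) ) and y'(t) = G̃( ∫_{−τ}^0 H(θ, x(t+θ), y(t+θ)) dθ, y(t) ). Then x is continuous and y is continuously differentiable on ℝ. -/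
/-!
After the substitution `s = t + θ`, the delayed integral becomes
`∫ s, 1_{(t-τ, t]}(s) K(s - t, x s, y s)`. For every `s` other than the two endpoints
`t₀ - τ`, `t₀` the integrand depends continuously on `t` near `t₀`, and it is dominated by
a constant on a compact interval because `x` is bounded and `y` is continuous. Dominated
convergence makes both delayed integrals continuous in `t`, and then so are `x` and `y'`,
being continuous functions of them and of `y`.
-/

open MeasureTheory Filter Topology Set

theorem frontier_Ico_subset {α : Type*} [TopologicalSpace α] [LinearOrder α] [OrderTopology α]
    [DenselyOrdered α] [NoMinOrder α] (p q : α) : frontier (Ico p q) ⊆ {p, q} := by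
  rcases lt_or_ge p q with h | h
  · exact (frontier_Ico h).subset
  · simp [Ico_eq_empty_of_le h]

theorem indicator_Ioc_add_eq_indicator_Ico_sub {M : Type*} [Zero M] (f : ℝ → ℝ → M)
    (a b s t : ℝ) :
    (Ioc (t + a) (t + b)).indicator (fun s => f (s - t) s) s
      = (Ico (s - b) (s - a)).indicator (fun t => f (s - t) s) t := by
  by_cases h : s ∈ Ioc (t + a) (t + b)
  · rw [indicator_of_mem h,
      indicator_of_mem (s := Ico _ _) ⟨by linarith [h.2], by linarith [h.1]⟩]
  · rw [indicator_of_notMem h, indicator_of_notMem]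
    exact fun h' => h ⟨by linarith [h'.2], by linarith [h'.1]⟩

section

variable {E : Type*} [NormedAddCommGroup E] [NormedSpace ℝ E]

theorem intervalIntegral_comp_add_eq_integral_indicator {a b : ℝ} (hab : a ≤ b)
    (f : ℝ → ℝ → E) (t : ℝ) :
    ∫ θ in a..b, f θ (t + θ)
      = ∫ s, (Ioc (t + a) (t + b)).indicator (fun s => f (s - t) s) s := by
  have h := intervalIntegral.integral_comp_add_left (a := a) (b := b)
    (fun s => f (s - t) s) t
  simp only [add_sub_cancel_left] at h
  rw [h, intervalIntegral.integral_of_le (by linarith), integral_indicator measurableSet_Ioc]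

theorem continuous_intervalIntegral_comp_add_of_le {f : ℝ → ℝ → E} {a b : ℝ}
    (hab : a ≤ b) (hcont : ∀ s, Continuous fun θ => f θ s)
    (hmeas : ∀ θ, StronglyMeasurable (f θ))
    (hbdd : ∀ L, IsCompact L → ∃ M, ∀ θ ∈ uIcc a b, ∀ s ∈ L, ‖f θ s‖ ≤ M) :
    Continuous fun t => ∫ θ in a..b, f θ (t + θ) := by
  simp only [intervalIntegral_comp_add_eq_integral_indicator hab]
  refine continuous_iff_continuousAt.2 fun t₀ => ?_
  set L := Icc (t₀ + a - 1) (t₀ + b + 1)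
  obtain ⟨M, hM⟩ := hbdd L isCompact_Icc
  rw [uIcc_of_le hab] at hM
  have hf : StronglyMeasurable (Function.uncurry f) :=
    stronglyMeasurable_uncurry_of_continuous_of_stronglyMeasurable hcont hmeas
  refine continuousAt_of_dominated (bound := L.indicator fun _ => M) ?_ ?_ ?_ ?_
  · refine .of_forall fun t => ?_
    exact ((hf.comp_measurable ((measurable_id.sub_const t).prodMk measurable_id)).indicator
      measurableSet_Ioc).aestronglyMeasurable
  · filter_upwards [Metric.ball_mem_nhds t₀ one_pos] with t ht
    rw [Metric.mem_ball, Real.dist_eq, abs_lt] at ht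
    refine .of_forall fun s => ?_
    by_cases hs : s ∈ Ioc (t + a) (t + b)
    · have hsL : s ∈ L := ⟨by linarith [hs.1], by linarith [hs.2]⟩
      rw [indicator_of_mem hs, indicator_of_mem hsL]
      exact hM _ ⟨by linarith [hs.1], by linarith [hs.2]⟩ s hsL
    · rw [indicator_of_notMem hs, norm_zero]
      exact indicator_nonneg (fun s hs => (norm_nonneg _).trans (hM a ⟨le_rfl, hab⟩ s hs)) _
  · exact (integrableOn_const (by simp [L])).integrable_indicator measurableSet_Icc
  · have hends : ({t₀ + a, t₀ + b} : Set ℝ).Countable := (toFinite _).countable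
    filter_upwards [hends.ae_notMem volume] with s hs
    simp only [indicator_Ioc_add_eq_indicator_Ico_sub f a b s]
    refine ((hcont s).comp (continuous_const.sub continuous_id)).continuousOn
      |>.continuousAt_indicator fun h => hs ?_
    rcases frontier_Ico_subset _ _ h with rfl | rfl <;> simp

theorem continuous_intervalIntegral_comp_add {f : ℝ → ℝ → E} (a b : ℝ)
    (hcont : ∀ s, Continuous fun θ => f θ s) (hmeas : ∀ θ, StronglyMeasurable (f θ))
    (hbdd : ∀ L, IsCompact L → ∃ M, ∀ θ ∈ uIcc a b, ∀ s ∈ L, ‖f θ s‖ ≤ M) :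
    Continuous fun t => ∫ θ in a..b, f θ (t + θ) := by
  rcases le_total a b with hab | hba
  · exact continuous_intervalIntegral_comp_add_of_le hab hcont hmeas hbdd
  · simp only [uIcc_comm a b] at hbdd
    simp only [intervalIntegral.integral_symm b a]
    exact (continuous_intervalIntegral_comp_add_of_le hba hcont hmeas hbdd).neg

end

theorem continuous_intervalIntegral_delay {X Y E : Type*} [NormedAddCommGroup X]
    [ProperSpace X] [MeasurableSpace X] [BorelSpace X]
    [TopologicalSpace Y] [SecondCountableTopology Y]
    [MeasurableSpace Y] [BorelSpace Y] [NormedAddCommGroup E] [NormedSpace ℝ E]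
    {K : ℝ × X × Y → E} (hK : Continuous K) {x : ℝ → X} (hxm : Measurable x) {C : ℝ}
    (hxb : ∀ t, ‖x t‖ ≤ C) {y : ℝ → Y} (hy : Continuous y) (a b : ℝ) :
    Continuous fun t => ∫ θ in a..b, K (θ, x (t + θ), y (t + θ)) := by
  refine continuous_intervalIntegral_comp_add (f := fun θ s => K (θ, x s, y s)) a b
    (fun s => hK.comp (continuous_id.prodMk continuous_const))
    (fun θ => hK.stronglyMeasurable.comp_measurable
      (measurable_const.prodMk (hxm.prodMk hy.measurable)))
    fun L hL => ?_
  obtain ⟨M, hM⟩ := (isCompact_uIcc.prod ((isCompact_closedBall 0 C).prod (hL.image hy)))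
    |>.exists_bound_of_continuousOn hK.continuousOn
  exact ⟨M, fun θ hθ s hs =>
    hM _ ⟨hθ, mem_closedBall_zero_iff.2 (hxb s), mem_image_of_mem y hs⟩⟩

theorem stmt8_general (d : ℕ)
    (τ : ℝ)
    (K H : ℝ × (Fin d → ℝ) × (Fin d → ℝ) → Fin d → ℝ)
    (hK : Continuous K) (hH : Continuous H)
    (Ftil Gtil : (Fin d → ℝ) × (Fin d → ℝ) → Fin d → ℝ)
    (hF : Continuous Ftil) (hG : Continuous Gtil)
    (x y : ℝ → Fin d → ℝ)
    (hxm : Measurable x) (C : ℝ) (hxb : ∀ t, ‖x t‖ ≤ C)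
    (hyd : Differentiable ℝ y)
    (hxe : ∀ t : ℝ, x t = Ftil (∫ θ in (-τ)..0, K (θ, x (t + θ), y (t + θ)), y t))
    (hye : ∀ t : ℝ, deriv y t = Gtil (∫ θ in (-τ)..0, H (θ, x (t + θ), y (t + θ)), y t)) :
    Continuous x ∧ ContDiff ℝ 1 y := by
  have hy : Continuous y := hyd.continuous
  have hIK := continuous_intervalIntegral_delay hK hxm hxb hy (-τ) 0
  have hIH := continuous_intervalIntegral_delay hH hxm hxb hy (-τ) 0
  refine ⟨(hF.comp (hIK.prodMk hy)).congr fun t => (hxe t).symm,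
    contDiff_one_iff_deriv.2 ⟨hyd, ?_⟩⟩
  exact (hG.comp (hIH.prodMk hy)).congr fun t => (hye t).symm

/-- Basic regularity of periodic solutions of the coupled renewal/delay system:
if `K, H, F̃, G̃` are continuous and `(x, y)` is a bounded measurable /
differentiable `ω`-periodic solution of the coupled system, then `x` is
continuous and `y` is continuously differentiable. -/
theorem stmt8 (d : ℕ) (hd : 1 ≤ d)
    (τ ω : ℝ) (hτ : 0 < τ) (hω : 0 < ω)
    (K H : ℝ × (Fin d → ℝ) × (Fin d → ℝ) → Fin d → ℝ)
    (hK : Continuous K) (hH : Continuous H)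
    (Ftil Gtil : (Fin d → ℝ) × (Fin d → ℝ) → Fin d → ℝ)
    (hF : Continuous Ftil) (hG : Continuous Gtil)
    (x y : ℝ → Fin d → ℝ)
    (hxm : Measurable x) (C : ℝ) (hxb : ∀ t, ‖x t‖ ≤ C)
    (hyd : Differentiable ℝ y)
    (hxp : Function.Periodic x ω) (hyp : Function.Periodic y ω)
    (hxe : ∀ t : ℝ, x t = Ftil (∫ θ in (-τ)..0, K (θ, x (t + θ), y (t + θ)), y t))
    (hye : ∀ t : ℝ, deriv y t = Gtil (∫ θ in (-τ)..0, H (θ, x (t + θ), y (t + θ)), y t)) :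
    Continuous x ∧ ContDiff ℝ 1 y :=
  stmt8_general d τ K H hK hH Ftil Gtil hF hG x y hxm C hxb hyd hxe hye
end

section
/- Let d ≥ 1 and r ∈ (0, 1]. Let w : ℝ × ℝ → ℝ^{d×d} (matrix-valued) be measurable and bounded, 1-periodic in its first argument (w(s+1, θ) = w(s, θ) for all s, θ), and satisfying w(s, θ) = 0 whenever θ ∉ [−r, 0]. Fix t ∈ ℝ, and let φ : [−1, 0] → ℝ^d and ψ : [0, 1] → ℝ^d be bounded and measurable. Suppose z : [t−1, t+1] → ℝ^d is bounded measurable with z(t+s) = φ(s) for s ∈ [−1, 0] and z(s) = ∫_{s−r}^{s} w(s, θ−s)·z(θ) dθ for all s ∈ (t, t+1], and suppose ζ : [t−1, t+1] → ℝ^d is bounded measurable with ζ(t+η) = ψ(η) for η ∈ [0, 1] and ζ(s) = ∫_{s}^{s+r} w(σ, s−σ)ᵀ·ζ(σ) dσ for all s ∈ [t−1, t). Then ∫_0^1 ⟨ ζ(t−1+η), ∫_{−1}^0 w(t+η, β−η)·φ(β) dβ ⟩ dη = ∫_0^1 ⟨ ψ(η), ∫_{−1}^0 w(t+η, β−η)·z(t+1+β)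 dβ ⟩ dη, where ⟨·,·⟩ is the Euclidean inner product on ℝ^d; i.e., the forward monodromy operator T(t+1, t)φ = z_{t+1} and the backward (adjoint) monodromy operator V(t−1, t)ψ = ζ_{t−1} are adjoint with respect to the bilinear form [ψ, φ]_t := ∫_0^1 ⟨ψ(η), ∫_{−1}^0 w(t+η, β−η)φ(β) dβ⟩ dη. -/
/-!
Write `K a θ = w a (θ - a)` for the kernel in absolute time. Since `w` is supported in
`[-r, 0]` and `r ≤ 1`, on the window `[t - 1, t + 1]` the two equations read `z = ∫ K z` and
`ζ = ∫ Kᵀ ζ`, both integrals running over the whole window. Now integrate `ζ (a - 1) ⬝ᵥ z a`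
over `a ∈ [t, t + 1]` in two ways. Expanding `z a` by the forward equation gives the left-hand
pairing plus the cross term `∫∫_{[t, t+1]²} ζ (a - 1) ⬝ᵥ K a θ z θ`. Expanding `ζ (a - 1)` by the
adjoint equation and applying Fubini gives the right-hand pairing plus
`∫∫_{[t-1, t]²} ζ σ ⬝ᵥ K σ s z (s + 1)`, which is the same cross term because
`K (a + 1) (θ + 1) = K a θ`.
-/

open MeasureTheory intervalIntegral Matrix Set

namespace Matrix

variable {n : Type*} [Fintype n]

theorem abs_dotProduct_le {u v : n → ℝ} {Cu Cv : ℝ} (hu : ‖u‖ ≤ Cu) (hv : ‖v‖ ≤ Cv) :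
    |u ⬝ᵥ v| ≤ Fintype.card n * Cu * Cv := by
  calc |u ⬝ᵥ v| ≤ ∑ i, |u i * v i| := Finset.abs_sum_le_sum_abs _ _
    _ ≤ ∑ _i : n, Cu * Cv := Finset.sum_le_sum fun i _ => by
        rw [abs_mul]
        exact mul_le_mul ((norm_le_pi_norm u i).trans hu) ((norm_le_pi_norm v i).trans hv)
          (abs_nonneg _) ((norm_nonneg u).trans hu)
    _ = Fintype.card n * Cu * Cv := by simp [mul_assoc]

theorem norm_mulVec_le_of_abs_le {M : Matrix n n ℝ} {v : n → ℝ} {C Cv : ℝ}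
    (hM : ∀ i j, |M i j| ≤ C) (hv : ‖v‖ ≤ Cv) : ‖M *ᵥ v‖ ≤ Fintype.card n * C * Cv := by
  rcases isEmpty_or_nonempty n with _ | _
  · simp [Subsingleton.elim (M *ᵥ v) 0]
  exact (pi_norm_le_iff_of_nonempty _).2 fun i =>
    abs_dotProduct_le ((pi_norm_le_iff_of_nonempty _).2 fun j => hM i j) hv

end Matrix

section Measurability

variable {α : Type*} [MeasurableSpace α] {n : Type*}

theorem Measurable.matrix_mulVec [Fintype n] {M : α → Matrix n n ℝ}
    (hM : Measurable fun x => of.symm (M x)) {v : α → n → ℝ} (hv : Measurable v) :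
    Measurable fun x => M x *ᵥ v x := by
  have hcont : Continuous fun p : (n → n → ℝ) × (n → ℝ) => of p.1 *ᵥ p.2 := by fun_prop
  exact hcont.measurable.comp (hM.prodMk hv)

theorem Measurable.dotProduct [Fintype n] {u v : α → n → ℝ} (hu : Measurable u)
    (hv : Measurable v) : Measurable fun x => u x ⬝ᵥ v x :=
  (continuous_fst.dotProduct continuous_snd).measurable.comp (hu.prodMk hv)

theorem Measurable.matrix_transpose {M : α → Matrix n n ℝ}
    (hM : Measurable fun x => of.symm (M x)) :
    Measurable fun x => of.symm (M x)ᵀ :=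
  measurable_pi_lambda _ fun i => measurable_pi_lambda _ fun j =>
    (measurable_pi_apply i).comp ((measurable_pi_apply j).comp hM)

end Measurability

section Integrals

variable {n : Type*} [Fintype n] {a b : ℝ}

theorem dotProduct_intervalIntegral {u : n → ℝ} {f : ℝ → n → ℝ}
    (hf : IntervalIntegrable f volume a b) :
    u ⬝ᵥ ∫ x in a..b, f x = ∫ x in a..b, u ⬝ᵥ f x :=
  ((LinearMap.toContinuousLinearMap (dotProductBilin ℝ ℝ u)).intervalIntegral_comp_comm hf).symm

theorem intervalIntegrable_of_norm_le {E : Type*} [NormedAddCommGroup E] {f : ℝ → E} {C : ℝ}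
    (hab : a ≤ b) (hf : AEStronglyMeasurable f) (hfC : ∀ x ∈ Icc a b, ‖f x‖ ≤ C) :
    IntervalIntegrable f volume a b :=
  (intervalIntegrable_iff_integrableOn_Ioc_of_le hab).2 <|
    Measure.integrableOn_of_bounded measure_Ioc_lt_top.ne hf <|
      ae_restrict_of_forall_mem measurableSet_Ioc fun x hx => hfC x (Ioc_subset_Icc_self hx)

theorem intervalIntegral_eq_of_forall_notMem_Icc {E : Type*} [NormedAddCommGroup E]
    [NormedSpace ℝ E] {f : ℝ → E} {c e : ℝ} (hce : c ≤ e) (hac : a ≤ c) (heb : e ≤ b)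
    (hf : ∀ x ∉ Icc c e, f x = 0) : ∫ x in c..e, f x = ∫ x in a..b, f x := by
  rw [integral_of_le hce, integral_of_le (hac.trans (hce.trans heb)),
    ← integral_Icc_eq_integral_Ioc, ← integral_Icc_eq_integral_Ioc,
    setIntegral_eq_integral_of_forall_compl_eq_zero hf,
    setIntegral_eq_integral_of_forall_compl_eq_zero fun x hx =>
      hf x fun h => hx (Icc_subset_Icc hac heb h)]

theorem intervalIntegrable_mulVec {M : ℝ → Matrix n n ℝ} {v : ℝ → n → ℝ} {C Cv : ℝ}
    (hM : Measurable fun x => of.symm (M x)) (hMb : ∀ x i j, |M x i j| ≤ C) (hv : Measurable v)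
    (hab : a ≤ b) (hvb : ∀ x ∈ Icc a b, ‖v x‖ ≤ Cv) :
    IntervalIntegrable (fun x => M x *ᵥ v x) volume a b :=
  intervalIntegrable_of_norm_le hab (hM.matrix_mulVec hv).aestronglyMeasurable fun x hx =>
    norm_mulVec_le_of_abs_le (hMb x) (hvb x hx)

end Integrals

section Kernel

variable {n : Type*} [Fintype n] {K : ℝ → ℝ → Matrix n n ℝ} {u v : ℝ → n → ℝ}
  {a₀ a₁ b₀ b₁ C Cu Cv : ℝ}

theorem integrable_dotProduct_mulVec_prod (hK : Measurable fun p : ℝ × ℝ => of.symm (K p.1 p.2))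
    (hKb : ∀ a θ i j, |K a θ i j| ≤ C) (hu : Measurable u) (hv : Measurable v)
    (hub : ∀ a ∈ Icc a₀ a₁, ‖u a‖ ≤ Cu) (hvb : ∀ θ ∈ Icc b₀ b₁, ‖v θ‖ ≤ Cv) :
    Integrable (fun p : ℝ × ℝ => u p.1 ⬝ᵥ (K p.1 p.2 *ᵥ v p.2))
      ((volume.restrict (Ioc a₀ a₁)).prod (volume.restrict (Ioc b₀ b₁))) := by
  rw [Measure.prod_restrict]
  refine Measure.integrableOn_of_bounded ?_
    ((hu.comp measurable_fst).dotProduct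
      (hK.matrix_mulVec (hv.comp measurable_snd))).aestronglyMeasurable
    (ae_restrict_of_forall_mem (measurableSet_Ioc.prod measurableSet_Ioc) fun p hp =>
      abs_dotProduct_le (hub _ (Ioc_subset_Icc_self hp.1))
        (norm_mulVec_le_of_abs_le (hKb _ _) (hvb _ (Ioc_subset_Icc_self hp.2))))
  rw [Measure.prod_prod]
  exact ENNReal.mul_ne_top measure_Ioc_lt_top.ne measure_Ioc_lt_top.ne

theorem intervalIntegrable_dotProduct_integral_mulVec
    (hK : Measurable fun p : ℝ × ℝ => of.symm (K p.1 p.2)) (hKb : ∀ a θ i j, |K a θ i j| ≤ C)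
    (hu : Measurable u) (hv : Measurable v) (ha : a₀ ≤ a₁) (hb : b₀ ≤ b₁)
    (hub : ∀ a ∈ Icc a₀ a₁, ‖u a‖ ≤ Cu) (hvb : ∀ θ ∈ Icc b₀ b₁, ‖v θ‖ ≤ Cv) :
    IntervalIntegrable (fun a => u a ⬝ᵥ ∫ θ in b₀..b₁, K a θ *ᵥ v θ) volume a₀ a₁ := by
  rw [intervalIntegrable_iff_integrableOn_Ioc_of_le ha]
  refine (integrable_dotProduct_mulVec_prod hK hKb hu hv hub hvb).integral_prod_left.congr
    (ae_of_all _ fun a => ?_)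
  dsimp only
  rw [dotProduct_intervalIntegral
    (intervalIntegrable_mulVec (M := K a) (hK.comp measurable_prodMk_left) (hKb a) hv hb hvb),
    integral_of_le hb]

theorem integral_dotProduct_integral_mulVec_comm
    (hK : Measurable fun p : ℝ × ℝ => of.symm (K p.1 p.2)) (hKb : ∀ a θ i j, |K a θ i j| ≤ C)
    (hu : Measurable u) (hv : Measurable v) (ha : a₀ ≤ a₁) (hb : b₀ ≤ b₁)
    (hub : ∀ a ∈ Icc a₀ a₁, ‖u a‖ ≤ Cu) (hvb : ∀ θ ∈ Icc b₀ b₁, ‖v θ‖ ≤ Cv) :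
    ∫ a in a₀..a₁, u a ⬝ᵥ ∫ θ in b₀..b₁, K a θ *ᵥ v θ =
      ∫ θ in b₀..b₁, v θ ⬝ᵥ ∫ a in a₀..a₁, (K a θ)ᵀ *ᵥ u a := by
  calc _ = ∫ a in a₀..a₁, ∫ θ in b₀..b₁, u a ⬝ᵥ (K a θ *ᵥ v θ) := integral_congr fun a _ =>
        dotProduct_intervalIntegral
          (intervalIntegrable_mulVec (hK.comp measurable_prodMk_left) (hKb a) hv hb hvb)
    _ = ∫ θ in b₀..b₁, ∫ a in a₀..a₁, u a ⬝ᵥ (K a θ *ᵥ v θ) := by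
        simp only [integral_of_le ha, integral_of_le hb]
        exact integral_integral_swap (integrable_dotProduct_mulVec_prod hK hKb hu hv hub hvb)
    _ = _ := integral_congr fun θ _ => by
        rw [dotProduct_intervalIntegral (intervalIntegrable_mulVec
          (hK.comp measurable_prodMk_right).matrix_transpose (fun a i j => hKb a θ j i) hu ha hub)]
        simp only [mulVec_transpose, dotProduct_mulVec, dotProduct_comm (v θ)]

theorem integral_dotProduct_eq_add_of_eq_integral_mulVec {f : ℝ → n → ℝ} {m : ℝ}
    (hK : Measurable fun p : ℝ × ℝ => of.symm (K p.1 p.2)) (hKb : ∀ a θ i j, |K a θ i j| ≤ C)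
    (hu : Measurable u) (hv : Measurable v) (ha : a₀ ≤ a₁) (hm₀ : b₀ ≤ m) (hm₁ : m ≤ b₁)
    (hub : ∀ a ∈ Icc a₀ a₁, ‖u a‖ ≤ Cu) (hvb : ∀ θ ∈ Icc b₀ b₁, ‖v θ‖ ≤ Cv)
    (hf : ∀ a ∈ Ioo a₀ a₁, f a = ∫ θ in b₀..b₁, K a θ *ᵥ v θ) :
    ∫ a in a₀..a₁, u a ⬝ᵥ f a =
      (∫ a in a₀..a₁, u a ⬝ᵥ ∫ θ in b₀..m, K a θ *ᵥ v θ) +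
        ∫ a in a₀..a₁, u a ⬝ᵥ ∫ θ in m..b₁, K a θ *ᵥ v θ := by
  have hvb₀ : ∀ θ ∈ Icc b₀ m, ‖v θ‖ ≤ Cv := fun θ hθ => hvb θ (Icc_subset_Icc le_rfl hm₁ hθ)
  have hvb₁ : ∀ θ ∈ Icc m b₁, ‖v θ‖ ≤ Cv := fun θ hθ => hvb θ (Icc_subset_Icc hm₀ le_rfl hθ)
  rw [← integral_add
    (intervalIntegrable_dotProduct_integral_mulVec hK hKb hu hv ha hm₀ hub hvb₀)
    (intervalIntegrable_dotProduct_integral_mulVec hK hKb hu hv ha hm₁ hub hvb₁)]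
  refine integral_congr_uIoo fun a ha' => ?_
  rw [uIoo_of_le ha] at ha'
  have hKa : Measurable fun θ => of.symm (K a θ) := hK.comp measurable_prodMk_left
  rw [hf a ha', ← integral_add_adjacent_intervals
    (intervalIntegrable_mulVec hKa (hKb a) hv hm₀ hvb₀)
    (intervalIntegrable_mulVec hKa (hKb a) hv hm₁ hvb₁), dotProduct_add]

end Kernel

section Delay

variable {n : Type*} [Fintype n] {w : ℝ → ℝ → Matrix n n ℝ} {r a b s : ℝ}

theorem integral_mulVec_sub_eq_of_support (hr : 0 ≤ r)
    (hw : ∀ s θ, θ ∉ Icc (-r) 0 → w s θ = 0) (ha : a ≤ s - r) (hb : s ≤ b) (z : ℝ → n → ℝ) :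
    ∫ θ in (s - r)..s, w s (θ - s) *ᵥ z θ = ∫ θ in a..b, w s (θ - s) *ᵥ z θ :=
  intervalIntegral_eq_of_forall_notMem_Icc (by linarith) ha hb fun θ hθ => by
    rw [hw s (θ - s) fun h => hθ ⟨by linarith [h.1], by linarith [h.2]⟩, zero_mulVec]

theorem integral_transpose_mulVec_sub_eq_of_support (hr : 0 ≤ r)
    (hw : ∀ s θ, θ ∉ Icc (-r) 0 → w s θ = 0) (ha : a ≤ s) (hb : s + r ≤ b) (ζ : ℝ → n → ℝ) :
    ∫ σ in s..(s + r), (w σ (s - σ))ᵀ *ᵥ ζ σ = ∫ σ in a..b, (w σ (s - σ))ᵀ *ᵥ ζ σ :=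
  intervalIntegral_eq_of_forall_notMem_Icc (by linarith) ha hb fun σ hσ => by
    rw [hw σ (s - σ) fun h => hσ ⟨by linarith [h.2], by linarith [h.1]⟩, transpose_zero,
      zero_mulVec]

end Delay

theorem integral_dotProduct_integral_mulVec_translate {n : Type*} [Fintype n]
    (K : ℝ → ℝ → Matrix n n ℝ) (x y : ℝ → n → ℝ) (t : ℝ) :
    ∫ η in (0 : ℝ)..1, x (t + η) ⬝ᵥ ∫ β in (-1 : ℝ)..0, K (t + η) (t + β) *ᵥ y (t + β) =
      ∫ a in t..(t + 1), x a ⬝ᵥ ∫ θ in (t - 1)..t, K a θ *ᵥ y θ := by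
  have houter := integral_comp_add_left
    (fun a => x a ⬝ᵥ ∫ θ in (t - 1)..t, K a θ *ᵥ y θ) t (a := 0) (b := 1)
  rw [add_zero] at houter
  refine Eq.trans (integral_congr fun η _ => ?_) houter
  have hinner := integral_comp_add_left (fun θ => K (t + η) θ *ᵥ y θ) t (a := -1) (b := 0)
  rw [add_zero, ← sub_eq_add_neg] at hinner
  rw [hinner]

theorem integral_dotProduct_integral_mulVec_eq_of_periodic {n : Type*} [Fintype n]
    {K : ℝ → ℝ → Matrix n n ℝ} {C : ℝ}
    (hK : Measurable fun p : ℝ × ℝ => of.symm (K p.1 p.2)) (hKb : ∀ a θ i j, |K a θ i j| ≤ C)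
    (hKper : ∀ a θ, K (a + 1) (θ + 1) = K a θ) {t Cz Cζ : ℝ} {z ζ : ℝ → n → ℝ}
    (hzm : Measurable z) (hzb : ∀ s ∈ Icc (t - 1) (t + 1), ‖z s‖ ≤ Cz)
    (hζm : Measurable ζ) (hζb : ∀ s ∈ Icc (t - 1) (t + 1), ‖ζ s‖ ≤ Cζ)
    (hz : ∀ a ∈ Ioc t (t + 1), z a = ∫ θ in (t - 1)..(t + 1), K a θ *ᵥ z θ)
    (hζ : ∀ s ∈ Ico (t - 1) t, ζ s = ∫ σ in (t - 1)..(t + 1), (K σ s)ᵀ *ᵥ ζ σ) :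
    ∫ a in t..(t + 1), ζ (a - 1) ⬝ᵥ ∫ θ in (t - 1)..t, K a θ *ᵥ z θ =
      ∫ a in t..(t + 1), ζ a ⬝ᵥ ∫ θ in (t - 1)..t, K a θ *ᵥ z (θ + 1) := by
  have hlo : t - 1 ≤ t := by linarith
  have hhi : t ≤ t + 1 := by linarith
  have hz1m : Measurable fun s => z (s + 1) := hzm.comp (measurable_add_const 1)
  have hz1b : ∀ s ∈ Icc (t - 1) t, ‖z (s + 1)‖ ≤ Cz :=
    fun s hs => hzb _ ⟨by linarith [hs.1], by linarith [hs.2]⟩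
  have hζlo : ∀ σ ∈ Icc (t - 1) t, ‖ζ σ‖ ≤ Cζ :=
    fun σ hσ => hζb σ (Icc_subset_Icc le_rfl (by linarith) hσ)
  have hζhi : ∀ σ ∈ Icc t (t + 1), ‖ζ σ‖ ≤ Cζ :=
    fun σ hσ => hζb σ (Icc_subset_Icc (by linarith) le_rfl hσ)
  set M := ∫ a in t..(t + 1), ζ (a - 1) ⬝ᵥ ∫ θ in t..(t + 1), K a θ *ᵥ z θ
  have hforward : ∫ a in t..(t + 1), ζ (a - 1) ⬝ᵥ z a =
      (∫ a in t..(t + 1), ζ (a - 1) ⬝ᵥ ∫ θ in (t - 1)..t, K a θ *ᵥ z θ) + M :=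
    integral_dotProduct_eq_add_of_eq_integral_mulVec hK hKb (hζm.comp (measurable_sub_const 1))
      hzm hhi hlo hhi (fun a ha => hζb _ ⟨by linarith [ha.1], by linarith [ha.2]⟩) hzb
      fun a ha => hz a (Ioo_subset_Ioc_self ha)
  have hperiod : ∫ σ in (t - 1)..t, ζ σ ⬝ᵥ ∫ s in (t - 1)..t, K σ s *ᵥ z (s + 1) = M := by
    have hshift := integral_comp_add_right
      (fun a => ζ (a - 1) ⬝ᵥ ∫ θ in t..(t + 1), K a θ *ᵥ z θ) (a := t - 1) (b := t) 1
    simp only [add_sub_cancel_right, sub_add_cancel] at hshift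
    refine Eq.trans (integral_congr fun σ _ => ?_) hshift
    have hshift' := integral_comp_add_right (fun θ => K (σ + 1) θ *ᵥ z θ) (a := t - 1) (b := t) 1
    simp only [sub_add_cancel, hKper] at hshift'
    rw [hshift']
  have hbackward : ∫ a in t..(t + 1), ζ (a - 1) ⬝ᵥ z a =
      M + ∫ a in t..(t + 1), ζ a ⬝ᵥ ∫ θ in (t - 1)..t, K a θ *ᵥ z (θ + 1) := by
    calc _ = ∫ s in (t - 1)..t, z (s + 1) ⬝ᵥ ζ s := by
          simpa [dotProduct_comm] using
            (integral_comp_add_right (fun a => ζ (a - 1) ⬝ᵥ z a) (a := t - 1) (b := t) 1).symm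
      _ = (∫ s in (t - 1)..t, z (s + 1) ⬝ᵥ ∫ σ in (t - 1)..t, (K σ s)ᵀ *ᵥ ζ σ) +
            ∫ s in (t - 1)..t, z (s + 1) ⬝ᵥ ∫ σ in t..(t + 1), (K σ s)ᵀ *ᵥ ζ σ :=
          integral_dotProduct_eq_add_of_eq_integral_mulVec
            (Measurable.matrix_transpose (M := fun p : ℝ × ℝ => K p.2 p.1)
              (hK.comp measurable_swap))
            (fun s σ i j => hKb σ s j i) hz1m hζm hlo hlo hhi hz1b hζb
            fun s hs => hζ s (Ioo_subset_Ico_self hs)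
      _ = _ := by
          rw [← integral_dotProduct_integral_mulVec_comm hK hKb hζm hz1m hlo hlo hζlo hz1b,
            ← integral_dotProduct_integral_mulVec_comm hK hKb hζm hz1m hhi hlo hζhi hz1b, hperiod]
  linarith

theorem stmt13_general (d : ℕ) (r : ℝ) (hr0 : 0 < r) (hr1 : r ≤ 1)
    (w : ℝ → ℝ → Matrix (Fin d) (Fin d) ℝ)
    (hwm : Measurable fun p : ℝ × ℝ => Matrix.of.symm (w p.1 p.2))
    (Cw : ℝ) (hwb : ∀ s θ i j, |w s θ i j| ≤ Cw)
    (hwper : ∀ s θ, w (s + 1) θ = w s θ)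
    (hwsupp : ∀ s θ, θ ∉ Set.Icc (-r) 0 → w s θ = 0)
    (t : ℝ)
    (φ : ℝ → Fin d → ℝ)
    (ψ : ℝ → Fin d → ℝ)
    (z : ℝ → Fin d → ℝ) (hzm : Measurable z)
    (Cz : ℝ) (hzb : ∀ s ∈ Set.Icc (t - 1) (t + 1), ‖z s‖ ≤ Cz)
    (hzφ : ∀ s ∈ Set.Icc (-1 : ℝ) 0, z (t + s) = φ s)
    (hz : ∀ s ∈ Set.Ioc t (t + 1), z s = ∫ θ in (s - r)..s, w s (θ - s) *ᵥ z θ)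
    (ζ : ℝ → Fin d → ℝ) (hζm : Measurable ζ)
    (Cζ : ℝ) (hζb : ∀ s ∈ Set.Icc (t - 1) (t + 1), ‖ζ s‖ ≤ Cζ)
    (hζψ : ∀ η ∈ Set.Icc (0 : ℝ) 1, ζ (t + η) = ψ η)
    (hζ : ∀ s ∈ Set.Ico (t - 1) t, ζ s = ∫ σ in s..(s + r), (w σ (s - σ))ᵀ *ᵥ ζ σ) :
    (∫ η in (0 : ℝ)..1,
        ζ (t - 1 + η) ⬝ᵥ (∫ β in (-1 : ℝ)..0, w (t + η) (β - η) *ᵥ φ β)) =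
      ∫ η in (0 : ℝ)..1,
        ψ η ⬝ᵥ (∫ β in (-1 : ℝ)..0, w (t + η) (β - η) *ᵥ z (t + 1 + β)) := by
  have hK : Measurable fun p : ℝ × ℝ => of.symm (w p.1 (p.2 - p.1)) :=
    hwm.comp (measurable_fst.prodMk (measurable_snd.sub measurable_fst))
  have hzK : ∀ a ∈ Ioc t (t + 1), z a = ∫ θ in (t - 1)..(t + 1), w a (θ - a) *ᵥ z θ :=
    fun a ha => (hz a ha).trans <|
      integral_mulVec_sub_eq_of_support hr0.le hwsupp (by linarith [ha.1]) ha.2 z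
  have hζK : ∀ s ∈ Ico (t - 1) t, ζ s = ∫ σ in (t - 1)..(t + 1), (w σ (s - σ))ᵀ *ᵥ ζ σ :=
    fun s hs => (hζ s hs).trans <|
      integral_transpose_mulVec_sub_eq_of_support hr0.le hwsupp hs.1 (by linarith [hs.2]) ζ
  calc _ = ∫ η in (0 : ℝ)..1, ζ (t + η - 1) ⬝ᵥ
          ∫ β in (-1 : ℝ)..0, w (t + η) (t + β - (t + η)) *ᵥ z (t + β) :=
        integral_congr fun η _ => by
          rw [sub_add_eq_add_sub]
          exact congrArg _ (integral_congr fun β hβ => by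
            rw [add_sub_add_left_eq_sub, hzφ β (by rwa [uIcc_of_le (by norm_num)] at hβ)])
    _ = ∫ a in t..(t + 1), ζ (a - 1) ⬝ᵥ ∫ θ in (t - 1)..t, w a (θ - a) *ᵥ z θ :=
        integral_dotProduct_integral_mulVec_translate (fun a θ => w a (θ - a))
          (fun a => ζ (a - 1)) z t
    _ = ∫ a in t..(t + 1), ζ a ⬝ᵥ ∫ θ in (t - 1)..t, w a (θ - a) *ᵥ z (θ + 1) :=
        integral_dotProduct_integral_mulVec_eq_of_periodic hK (fun a θ => hwb a (θ - a))
          (fun a θ => by simp only [add_sub_add_right_eq_sub, hwper]) hzm hzb hζm hζb hzK hζK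
    _ = ∫ η in (0 : ℝ)..1, ζ (t + η) ⬝ᵥ
          ∫ β in (-1 : ℝ)..0, w (t + η) (t + β - (t + η)) *ᵥ z (t + β + 1) :=
        (integral_dotProduct_integral_mulVec_translate (fun a θ => w a (θ - a)) ζ
          (fun θ => z (θ + 1)) t).symm
    _ = _ := integral_congr fun η hη => by
          rw [hζψ η (by rwa [uIcc_of_le zero_le_one] at hη)]
          exact congrArg _ (integral_congr fun β _ => by
            rw [add_sub_add_left_eq_sub, add_right_comm])

/-- The forward monodromy operator `T(t+1, t)φ = z_{t+1}` of the linear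
Volterra integral equation `z(s) = ∫_{s−r}^{s} w(s, θ−s) z(θ) dθ` with
1-periodic kernel density `w` supported in `[−r, 0]`, and the backward
monodromy operator `V(t−1, t)ψ = ζ_{t−1}` of the adjoint equation
`ζ(s) = ∫_{s}^{s+r} w(σ, s−σ)ᵀ ζ(σ) dσ`, are adjoint with respect to the
bilinear form `[ψ, φ]_t = ∫₀¹ ⟨ψ(η), ∫_{−1}^0 w(t+η, β−η) φ(β) dβ⟩ dη`, i.e.
`[V(t−1,t)ψ, φ]_t = [ψ, T(t+1,t)φ]_t`. -/
theorem stmt13 (d : ℕ) (hd : 1 ≤ d) (r : ℝ) (hr0 : 0 < r) (hr1 : r ≤ 1)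
    (w : ℝ → ℝ → Matrix (Fin d) (Fin d) ℝ)
    (hwm : Measurable fun p : ℝ × ℝ => Matrix.of.symm (w p.1 p.2))
    (Cw : ℝ) (hwb : ∀ s θ i j, |w s θ i j| ≤ Cw)
    (hwper : ∀ s θ, w (s + 1) θ = w s θ)
    (hwsupp : ∀ s θ, θ ∉ Set.Icc (-r) 0 → w s θ = 0)
    (t : ℝ)
    (φ : ℝ → Fin d → ℝ) (hφm : Measurable φ)
    (Cφ : ℝ) (hφb : ∀ s ∈ Set.Icc (-1 : ℝ) 0, ‖φ s‖ ≤ Cφ)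
    (ψ : ℝ → Fin d → ℝ) (hψm : Measurable ψ)
    (Cψ : ℝ) (hψb : ∀ η ∈ Set.Icc (0 : ℝ) 1, ‖ψ η‖ ≤ Cψ)
    (z : ℝ → Fin d → ℝ) (hzm : Measurable z)
    (Cz : ℝ) (hzb : ∀ s ∈ Set.Icc (t - 1) (t + 1), ‖z s‖ ≤ Cz)
    (hzφ : ∀ s ∈ Set.Icc (-1 : ℝ) 0, z (t + s) = φ s)
    (hz : ∀ s ∈ Set.Ioc t (t + 1), z s = ∫ θ in (s - r)..s, w s (θ - s) *ᵥ z θ)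
    (ζ : ℝ → Fin d → ℝ) (hζm : Measurable ζ)
    (Cζ : ℝ) (hζb : ∀ s ∈ Set.Icc (t - 1) (t + 1), ‖ζ s‖ ≤ Cζ)
    (hζψ : ∀ η ∈ Set.Icc (0 : ℝ) 1, ζ (t + η) = ψ η)
    (hζ : ∀ s ∈ Set.Ico (t - 1) t, ζ s = ∫ σ in s..(s + r), (w σ (s - σ))ᵀ *ᵥ ζ σ) :
    (∫ η in (0 : ℝ)..1,
        ζ (t - 1 + η) ⬝ᵥ (∫ β in (-1 : ℝ)..0, w (t + η) (β - η) *ᵥ φ β)) =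
      ∫ η in (0 : ℝ)..1,
        ψ η ⬝ᵥ (∫ β in (-1 : ℝ)..0, w (t + η) (β - η) *ᵥ z (t + 1 + β)) :=
  stmt13_general d r hr0 hr1 w hwm Cw hwb hwper hwsupp t φ ψ z hzm Cz hzb hzφ hz ζ hζm Cζ hζb hζψ hζ
end
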